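/- arXiv:1711.00737 — 8 statements merged into one kernel-verified Lean document; each statement's English description precedes it below -/
import Mathlib

section
/- Suppose r ≤ b_y-norm = (1/c)·∫_c^0 (F(u) − F(c))/(R(u) − 1) du and the case hypothesis (P4) holds. Then the yield curve x ↦ Y(x,r) is strictly increasing on (0,∞) (the yield curve is normal). -/
/-!
The yield `Y x r` is the running average `(1/x) ∫₀ˣ g (B t) dt` of the forward rate
`g u = -F u - r (R u - 1)`, so it increases as soon as `∫₀ˣ g (B t) dt < x g (B x)`. The
substitution `u = B t` turns this into `0 < ∫_{B x}^0 (g (B x) - g u) / (1 - R u) du`, and (P4)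
makes `g` concave. If `g ≤ g (B x)` on `[B x, 0]`, the integrand is nonnegative, and strict
convexity (or `F' 0 > 0` when `r = 0`) keeps it from vanishing identically. Otherwise concavity
gives `g c < g (B x)` and `g ≥ g c` on `[c, B x]`, while the bound on `r` says precisely that
`∫_c^0 (g u - g c) / (1 - R u) du ≤ 0`; splitting this integral at `B x` gives the claim. The
singularity at `c` is integrable because `1 - R u ≥ (u - c) / (-c)` by convexity of `R`.
-/

open Filter Set MeasureTheory

theorem intervalIntegrable_div_of_abs_le_mul {f h : ℝ → ℝ} {a b K m : ℝ} (hab : a ≤ b)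
    (hf : ContinuousOn f (Ioc a b)) (hh : ContinuousOn h (Ioc a b)) (hm : 0 < m)
    (hfK : ∀ u ∈ Ioc a b, |f u| ≤ K * (u - a)) (hhm : ∀ u ∈ Ioc a b, m * (u - a) ≤ |h u|) :
    IntervalIntegrable (fun u => f u / h u) volume a b := by
  have hpos : ∀ u ∈ Ioc a b, 0 < |h u| := fun u hu =>
    (mul_pos hm (sub_pos.2 hu.1)).trans_le (hhm u hu)
  rw [intervalIntegrable_iff_integrableOn_Ioc_of_le hab]
  refine ⟨(hf.div hh fun u hu => abs_pos.1 (hpos u hu)).aestronglyMeasurable measurableSet_Ioc,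
    .restrict_of_bounded (C := K / m) measure_Ioc_lt_top ?_⟩
  filter_upwards [ae_restrict_mem measurableSet_Ioc] with u hu
  have hK : 0 ≤ K := nonneg_of_mul_nonneg_left ((abs_nonneg _).trans (hfK u hu)) (sub_pos.2 hu.1)
  rw [Real.norm_eq_abs, abs_div, div_le_div_iff₀ (hpos u hu) hm]
  calc |f u| * m ≤ K * (u - a) * m := mul_le_mul_of_nonneg_right (hfK u hu) hm.le
    _ = K * (m * (u - a)) := by ring
    _ ≤ K * |h u| := mul_le_mul_of_nonneg_left (hhm u hu) hK

theorem intervalIntegral.integral_comp_eq_integral_div {B ψ φ : ℝ → ℝ} {a b : ℝ} {s : Set ℝ}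
    (hB : ∀ t ∈ uIcc a b, HasDerivAt B (ψ (B t)) t) (hBs : MapsTo B (uIcc a b) s)
    (hψ : ContinuousOn ψ s) (hφ : ContinuousOn φ s) (hψ0 : ∀ u ∈ s, ψ u ≠ 0) :
    ∫ t in a..b, φ (B t) = ∫ u in B a..B b, φ u / ψ u := by
  have hBc : ContinuousOn B (uIcc a b) := fun t ht => (hB t ht).continuousAt.continuousWithinAt
  rw [← integral_comp_mul_deriv' (g := fun u => φ u / ψ u) hB (hψ.comp hBc hBs)
    ((hφ.div hψ hψ0).mono hBs.image_subset)]
  refine integral_congr fun t ht => ?_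
  simp only [Function.comp_apply, div_mul_cancel₀ _ (hψ0 _ (hBs ht))]

theorem strictMonoOn_integral_div_self {f : ℝ → ℝ} (hf : ContinuousOn f (Ici 0))
    (h : ∀ x > 0, ∫ s in 0..x, f s < x * f x) :
    StrictMonoOn (fun x => (∫ s in 0..x, f s) / x) (Ioi 0) := by
  have hderiv : ∀ x ∈ Ioi (0 : ℝ), HasDerivAt (fun y => (∫ s in 0..y, f s) / y)
      ((f x * x - (∫ s in 0..x, f s) * 1) / x ^ 2) x := by
    intro x (hx : 0 < x)
    have hI : HasDerivAt (fun y => ∫ s in 0..y, f s) (f x) x :=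
      intervalIntegral.integral_hasDerivAt_right
        ((hf.mono Icc_subset_Ici_self).intervalIntegrable_of_Icc hx.le)
        ((hf.mono Ioi_subset_Ici_self).stronglyMeasurableAtFilter isOpen_Ioi x hx)
        (hf.continuousAt (Ici_mem_nhds hx))
    exact hI.div (hasDerivAt_id x) hx.ne'
  refine strictMonoOn_of_deriv_pos (convex_Ioi 0)
    (fun x hx => (hderiv x hx).continuousAt.continuousWithinAt) fun x hx => ?_
  rw [interior_Ioi] at hx
  rw [(hderiv x hx).deriv]
  have := h x hx
  exact div_pos (by linarith [mul_comm x (f x)]) (pow_pos hx 2)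

theorem StrictConvexOn.const_mul {E : Type*} [AddCommMonoid E] [Module ℝ E] {s : Set E}
    {f : E → ℝ} {a : ℝ} (hf : StrictConvexOn ℝ s f) (ha : 0 < a) :
    StrictConvexOn ℝ s fun x => a * f x := by
  refine ⟨hf.1, fun x hx y hy hxy α β hα hβ hαβ => ?_⟩
  have := mul_lt_mul_of_pos_left (hf.2 hx hy hxy hα hβ hαβ) ha
  simp only [smul_eq_mul] at this ⊢
  linarith

theorem deriv_eq_zero_of_eqOn_Icc {f : ℝ → ℝ} {a b : ℝ} (hab : a < b)
    (hf : EqOn f (fun _ => f a) (Icc a b)) : deriv f b = 0 := by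
  by_cases hd : DifferentiableAt ℝ f b
  · have hb : b ∈ Icc a b := right_mem_Icc.2 hab.le
    exact (uniqueDiffOn_Icc hab b hb).eq_deriv _ hd.hasDerivAt.hasDerivWithinAt
      ((hasDerivWithinAt_const b _ (f a)).congr hf (hf hb))
  · exact deriv_zero_of_not_differentiableAt hd

theorem integral_sub_div_one_sub_pos {c b : ℝ} {g R : ℝ → ℝ} (hcb : c < b) (hb : b < 0)
    (hg : ConcaveOn ℝ (Icc c 0) g) (hgc : ContinuousOn g (Icc b 0))
    (hRc : ContinuousOn R (Icc b 0)) (hR1 : ∀ u ∈ Ioc c 0, R u < 1)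
    (hne : ∃ u ∈ Icc b 0, g u ≠ g b)
    (hint : IntervalIntegrable (fun u => (g u - g c) / (1 - R u)) volume c 0)
    (hK : ∫ u in c..0, (g u - g c) / (1 - R u) ≤ 0) :
    0 < ∫ u in b..0, (g b - g u) / (1 - R u) := by
  have hden : ∀ u ∈ Icc b 0, 0 < 1 - R u := fun u hu =>
    sub_pos.2 (hR1 u ⟨hcb.trans_le hu.1, hu.2⟩)
  have hcont : ∀ {φ : ℝ → ℝ}, ContinuousOn φ (Icc b 0) →
      ContinuousOn (fun u => φ u / (1 - R u)) (Icc b 0) := fun hφ =>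
    hφ.div (continuousOn_const.sub hRc) fun u hu => (hden u hu).ne'
  have hgb : ContinuousOn (fun u => g b - g u) (Icc b 0) := continuousOn_const.sub hgc
  have hgc' : ContinuousOn (fun u => g u - g c) (Icc b 0) := hgc.sub continuousOn_const
  by_cases hmax : ∀ u ∈ Icc b 0, g u ≤ g b
  · obtain ⟨u, hu, hne⟩ := hne
    refine intervalIntegral.integral_pos hb (hcont hgb)
      (fun v hv => div_nonneg (sub_nonneg.2 (hmax v (Ioc_subset_Icc_self hv)))
        (hden v (Ioc_subset_Icc_self hv)).le) ⟨u, hu, div_pos ?_ (hden u hu)⟩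
    exact sub_pos.2 ((hmax u hu).lt_of_ne hne)
  push Not at hmax
  obtain ⟨u₁, hu₁, hbu₁⟩ := hmax
  have hc0 : c ∈ Icc c 0 := ⟨le_rfl, (hcb.trans hb).le⟩
  have hgcb : g c < g b := by
    have hbu : b < u₁ := hu₁.1.lt_of_ne (by rintro rfl; exact hbu₁.false)
    have hslope := hg.slope_anti_adjacent hc0 ⟨hcb.le.trans hu₁.1, hu₁.2⟩ hcb hbu
    exact sub_pos.1 ((div_pos_iff_of_pos_right (sub_pos.2 hcb)).1
      ((div_pos (sub_pos.2 hbu₁) (sub_pos.2 hbu)).trans_le hslope))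
  have hleft : 0 ≤ ∫ u in c..b, (g u - g c) / (1 - R u) := by
    refine intervalIntegral.integral_nonneg hcb.le fun u hu => ?_
    rcases hu.1.eq_or_lt with rfl | hcu
    · simp
    have hmin := hg.min_le_of_mem_Icc hc0 ⟨hcb.le, hb.le⟩ hu
    rw [min_eq_left hgcb.le] at hmin
    exact div_nonneg (sub_nonneg.2 hmin) (sub_pos.2 (hR1 u ⟨hcu, hu.2.trans hb.le⟩)).le
  have hright : 0 < ∫ u in b..0, (g b - g c) / (1 - R u) :=
    intervalIntegral.intervalIntegral_pos_of_pos_on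
      ((hcont continuousOn_const).intervalIntegrable_of_Icc hb.le)
      (fun u hu => div_pos (sub_pos.2 hgcb) (hden u (Ioo_subset_Icc_self hu))) hb
  have hsplit := intervalIntegral.integral_add_adjacent_intervals
    (hint.mono_set (by
      rw [uIcc_of_le hcb.le, uIcc_of_le (hcb.trans hb).le]; exact Icc_subset_Icc_right hb.le))
    ((hcont hgc').intervalIntegrable_of_Icc hb.le)
  have hsum : (∫ u in b..0, (g b - g u) / (1 - R u)) + ∫ u in b..0, (g u - g c) / (1 - R u) =
      ∫ u in b..0, (g b - g c) / (1 - R u) := by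
    rw [← intervalIntegral.integral_add ((hcont hgb).intervalIntegrable_of_Icc hb.le)
      ((hcont hgc').intervalIntegrable_of_Icc hb.le)]
    congr 1; ext u; ring
  linarith

theorem integral_comp_lt_mul_of_integral_div_pos {g R B : ℝ → ℝ} {c x : ℝ} (hx : 0 < x)
    (hB : ∀ t ≥ 0, HasDerivAt B (R (B t) - 1) t) (hBs : MapsTo B (Ici 0) (Ioc c 0))
    (hB0 : B 0 = 0) (hg : ContinuousOn g (Ioc c 0)) (hR : ContinuousOn R (Ioc c 0))
    (hR1 : ∀ u ∈ Ioc c 0, R u < 1)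
    (hpos : 0 < ∫ u in B x..0, (g (B x) - g u) / (1 - R u)) :
    ∫ t in 0..x, g (B t) < x * g (B x) := by
  have hx' : uIcc 0 x ⊆ Ici 0 := by rw [uIcc_of_le hx.le]; exact Icc_subset_Ici_self
  have hsubst := intervalIntegral.integral_comp_eq_integral_div (φ := fun u => g (B x) - g u)
    (ψ := fun u => R u - 1) (fun t ht => hB t (hx' ht)) (hBs.mono_left hx')
    (hR.sub continuousOn_const) (continuousOn_const.sub hg) fun u hu => (sub_neg.2 (hR1 u hu)).ne
  have hgi : IntervalIntegrable (fun t => g (B t)) volume 0 x :=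
    (hg.comp (fun t ht => (hB t (hx' ht)).continuousAt.continuousWithinAt)
      (hBs.mono_left hx')).intervalIntegrable
  rw [intervalIntegral.integral_sub intervalIntegrable_const hgi, intervalIntegral.integral_const,
    hB0, smul_eq_mul, sub_zero] at hsubst
  have hflip : ∫ u in 0..B x, (g (B x) - g u) / (R u - 1) =
      ∫ u in B x..0, (g (B x) - g u) / (1 - R u) := by
    rw [intervalIntegral.integral_symm, ← intervalIntegral.integral_neg]
    congr 1; ext u
    rw [← neg_sub (R u), div_neg]
  linarith

theorem ConvexOn.const_mul_of_nonneg_or_eq_div {s : Set ℝ} {R : ℝ → ℝ} {r c : ℝ}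
    (hR : ConvexOn ℝ s R) (h : 0 ≤ r ∨ ∀ u, R u = u / c) : ConvexOn ℝ s fun u => r * R u := by
  rcases h with hr | hlin
  · exact hR.smul hr
  · have : (fun u => r * R u) = LinearMap.mulLeft ℝ (r / c) := by
      ext u; simp only [hlin, LinearMap.mulLeft_apply]; ring
    rw [this]
    exact LinearMap.convexOn _ hR.1

/-- `forwardRate F R r (B x)` is the derivative of `x ↦ -(A x + r * B x)`, the forward rate at
maturity `x`. -/
def forwardRate (F R : ℝ → ℝ) (r u : ℝ) : ℝ := -F u - r * (R u - 1)

section forwardRate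

variable {F R : ℝ → ℝ} {r c : ℝ}

theorem forwardRate_eq : forwardRate F R r = fun u => -(F u + r * R u) + r := by
  ext u; simp only [forwardRate]; ring

theorem forwardRate_concaveOn {s : Set ℝ} (hF : ConvexOn ℝ s F)
    (hrR : ConvexOn ℝ s fun u => r * R u) : ConcaveOn ℝ s (forwardRate F R r) := by
  rw [forwardRate_eq]
  exact (hF.add hrR).neg.add_const r

theorem forwardRate_strictConcaveOn {s : Set ℝ} (hF : ConvexOn ℝ s F)
    (hrR : ConvexOn ℝ s fun u => r * R u)
    (h : StrictConvexOn ℝ s F ∨ StrictConvexOn ℝ s fun u => r * R u) :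
    StrictConcaveOn ℝ s (forwardRate F R r) := by
  rw [forwardRate_eq]
  rcases h with h | h
  · exact (h.add_convexOn hrR).neg.add_const r
  · exact (hF.add_strictConvexOn h).neg.add_const r

theorem forwardRate_exists_ne {b : ℝ} (hbc : c ≤ b) (hb : b < 0) (hF : ConvexOn ℝ (Icc c 0) F)
    (hrR : ConvexOn ℝ (Icc c 0) fun u => r * R u)
    (hstrict : StrictConvexOn ℝ (Icc c 0) F ∨ StrictConvexOn ℝ (Icc c 0) R)
    (hP4 : (0 ≤ r ∧ 0 < deriv F 0) ∨ ∀ u, R u = u / c) :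
    ∃ u ∈ Icc b 0, forwardRate F R r u ≠ forwardRate F R r b := by
  by_contra! hconst
  suffices StrictConcaveOn ℝ (Icc c 0) (forwardRate F R r) by
    have hmax : ∀ v ∈ Icc b 0, IsMaxOn (forwardRate F R r) (Icc b 0) v := fun v hv u hu =>
      ((hconst u hu).trans (hconst v hv).symm).le
    exact hb.ne ((this.subset (Icc_subset_Icc_left hbc) (convex_Icc b 0)).eq_of_isMaxOn
      (hmax b ⟨le_rfl, hb.le⟩) (hmax 0 ⟨hb.le, le_rfl⟩) ⟨le_rfl, hb.le⟩ ⟨hb.le, le_rfl⟩)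
  rcases hstrict with hsF | hsR
  · exact forwardRate_strictConcaveOn hF hrR (Or.inl hsF)
  rcases hP4 with ⟨hr, hF'⟩ | hlin
  · rcases hr.eq_or_lt with rfl | hr
    · refine absurd (deriv_eq_zero_of_eqOn_Icc hb fun u hu => ?_) hF'.ne'
      simpa [forwardRate] using hconst u hu
    · exact forwardRate_strictConcaveOn hF hrR (Or.inr (hsR.const_mul hr))
  · have hc : c < 0 := hbc.trans_lt hb
    have := hsR.2 ⟨le_rfl, hc.le⟩ ⟨hc.le, le_rfl⟩ hc.ne (half_pos one_pos) (half_pos one_pos)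
      (add_halves 1)
    simp only [smul_eq_mul, hlin] at this
    field_simp at this
    linarith

theorem intervalIntegrable_sub_div_sub_one {s : Set ℝ} (hc : c < 0) (hs : IsOpen s)
    (hcs : Icc c 0 ⊆ s) (hF : ConvexOn ℝ s F) (hR : ConvexOn ℝ (Icc c 0) R)
    (hRcont : ContinuousOn R (Icc c 0)) (hR0 : R 0 = 0) (hRc : R c = 1) :
    IntervalIntegrable (fun u => (F u - F c) / (R u - 1)) volume c 0 := by
  obtain ⟨K, hK⟩ :=
    ((hF.locallyLipschitzOn hs).mono hcs).exists_lipschitzOnWith_of_compact isCompact_Icc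
  have hc0 : c ∈ Icc c 0 := ⟨le_rfl, hc.le⟩
  refine intervalIntegrable_div_of_abs_le_mul (K := K) hc.le
    ((((hF.continuousOn hs).mono hcs).sub continuousOn_const).mono Ioc_subset_Icc_self)
    ((hRcont.sub continuousOn_const).mono Ioc_subset_Icc_self) (neg_pos.2 (inv_lt_zero.2 hc))
    (fun u hu => ?_) (fun u hu => ?_)
  · simpa only [Real.dist_eq, abs_of_pos (sub_pos.2 hu.1)] using
      hK.dist_le_mul u (Ioc_subset_Icc_self hu) c hc0
  · -- the chord of `R` from `c` to `0` lies above `R`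
    have hsec := hR.secant_mono hc0 (Ioc_subset_Icc_self hu) ⟨hc.le, le_rfl⟩ hu.1.ne' hc.ne'
      hu.2
    rw [hR0, hRc, div_le_div_iff₀ (sub_pos.2 hu.1) (by linarith)] at hsec
    have hRu : R u - 1 ≤ c⁻¹ * (u - c) := by
      rw [inv_mul_eq_div, le_div_iff_of_neg hc]; linarith
    linarith [neg_le_abs (R u - 1)]

theorem integral_forwardRate_sub_div_nonpos (hc : c < 0) (hRc : R c = 1)
    (hR1 : ∀ u ∈ Ioc c 0, R u < 1)
    (hint : IntervalIntegrable (fun u => (F u - F c) / (R u - 1)) volume c 0)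
    (hr : r ≤ (1 / c) * ∫ u in c..(0:ℝ), (F u - F c) / (R u - 1)) :
    IntervalIntegrable
        (fun u => (forwardRate F R r u - forwardRate F R r c) / (1 - R u)) volume c 0 ∧
      ∫ u in c..0, (forwardRate F R r u - forwardRate F R r c) / (1 - R u) ≤ 0 := by
  have heq : EqOn (fun u => (F u - F c) / (R u - 1) + r)
      (fun u => (forwardRate F R r u - forwardRate F R r c) / (1 - R u)) (uIoo c 0) := by
    intro u hu
    rw [uIoo_of_le hc.le] at hu
    have h1 : R u - 1 ≠ 0 := (sub_neg.2 (hR1 u (Ioo_subset_Ioc_self hu))).ne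
    have h2 : 1 - R u ≠ 0 := fun h => h1 (by linarith)
    simp only [forwardRate, hRc]
    field_simp
    ring
  have hint' : IntervalIntegrable (fun u => (F u - F c) / (R u - 1) + r) volume c 0 :=
    hint.add intervalIntegrable_const
  refine ⟨hint'.congr_uIoo heq, ?_⟩
  rw [← intervalIntegral.integral_congr_uIoo heq, intervalIntegral.integral_add hint
    intervalIntegrable_const, intervalIntegral.integral_const, smul_eq_mul]
  have := mul_le_mul_of_nonpos_left hr hc.le
  rw [← mul_assoc, mul_one_div_cancel hc.ne, one_mul] at this
  linarith

theorem integral_forwardRate_comp {B : ℝ → ℝ} {x : ℝ} {s : Set ℝ} (hx : 0 ≤ x)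
    (hB : ∀ t ≥ 0, HasDerivAt B (R (B t) - 1) t) (hBs : MapsTo B (Ici 0) s) (hB0 : B 0 = 0)
    (hF : ContinuousOn F s) (hR : ContinuousOn R s) :
    ∫ t in 0..x, forwardRate F R r (B t) = -((∫ t in 0..x, F (B t)) + r * B x) := by
  have hBc : ContinuousOn B (Icc 0 x) := fun t ht => (hB t ht.1).continuousAt.continuousWithinAt
  have hBs' : MapsTo B (Icc 0 x) s := hBs.mono_left Icc_subset_Ici_self
  have hFi : IntervalIntegrable (fun t => F (B t)) volume 0 x :=
    (hF.comp hBc hBs').intervalIntegrable_of_Icc hx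
  have hRi : IntervalIntegrable (fun t => R (B t) - 1) volume 0 x :=
    ((hR.comp hBc hBs').sub continuousOn_const).intervalIntegrable_of_Icc hx
  have hFTC : ∫ t in 0..x, (R (B t) - 1) = B x - B 0 :=
    intervalIntegral.integral_eq_sub_of_hasDerivAt
      (fun t ht => hB t (by rw [uIcc_of_le hx] at ht; exact ht.1)) hRi
  simp only [forwardRate]
  rw [intervalIntegral.integral_sub (f := fun t => -F (B t)) hFi.neg (hRi.const_mul r),
    intervalIntegral.integral_neg, intervalIntegral.integral_const_mul, hFTC, hB0]
  ring

end forwardRate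

theorem yield_curve_normal_general
    (c : ℝ) (hc : c < 0)
    (F R : ℝ → ℝ) (ε : ℝ) (hε : 0 < ε)
    (hFconv : ConvexOn ℝ (Set.Ioo (c - ε) ε) F)
    (hRconv : ConvexOn ℝ (Set.Ioo (c - ε) ε) R)
    (hR0 : R 0 = 0) (hRc : R c = 1)
    (hRlt1 : ∀ u ∈ Set.Ioc c 0, R u < 1)
    (hstrict : StrictConvexOn ℝ (Set.Icc c 0) F ∨ StrictConvexOn ℝ (Set.Icc c 0) R)
    (B : ℝ → ℝ) (hB0 : B 0 = 0)
    (hBode : ∀ x ≥ (0:ℝ), HasDerivAt B (R (B x) - 1) x)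
    (hBanti : StrictAntiOn B (Set.Ici 0))
    (hBrange : ∀ x ≥ (0:ℝ), B x ∈ Set.Ioc c 0)
    (A : ℝ → ℝ) (hA : ∀ x, A x = ∫ s in (0:ℝ)..x, F (B s))
    (r : ℝ) (Y : ℝ → ℝ → ℝ)
    (hY : ∀ x r', Y x r' = -(A x + r' * B x) / x)
    (hP4 : (0 ≤ r ∧ 0 < deriv F 0) ∨ (∀ u, R u = u / c))
    (hr : r ≤ (1 / c) * ∫ u in c..(0:ℝ), (F u - F c) / (R u - 1)) :
    StrictMonoOn (fun x => Y x r) (Set.Ioi 0) := by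
  have hS : Icc c 0 ⊆ Ioo (c - ε) ε := fun u hu => ⟨by linarith [hu.1], hu.2.trans_lt hε⟩
  have hF := hFconv.subset hS (convex_Icc c 0)
  have hR := hRconv.subset hS (convex_Icc c 0)
  have hFcont := (hFconv.continuousOn isOpen_Ioo).mono hS
  have hRcont := (hRconv.continuousOn isOpen_Ioo).mono hS
  have hrR := hR.const_mul_of_nonneg_or_eq_div (hP4.imp And.left id)
  set g := forwardRate F R r
  have hgcont : ContinuousOn g (Icc c 0) :=
    hFcont.neg.sub (continuousOn_const.mul (hRcont.sub continuousOn_const))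
  have hK := integral_forwardRate_sub_div_nonpos hc hRc hRlt1
    (intervalIntegrable_sub_div_sub_one hc isOpen_Ioo hS hFconv hR hRcont hR0 hRc) hr
  have hfwd : ∀ x > 0, ∫ t in 0..x, g (B t) < x * g (B x) := fun x hx => by
    obtain ⟨hcB, -⟩ := hBrange x hx.le
    have hBx : B x < 0 := hB0 ▸ hBanti self_mem_Ici hx.le hx
    have hsub : Icc (B x) 0 ⊆ Icc c 0 := Icc_subset_Icc_left hcB.le
    refine integral_comp_lt_mul_of_integral_div_pos hx hBode hBrange hB0
      (hgcont.mono Ioc_subset_Icc_self) (hRcont.mono Ioc_subset_Icc_self) hRlt1 ?_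
    exact integral_sub_div_one_sub_pos hcB hBx (forwardRate_concaveOn hF hrR) (hgcont.mono hsub)
      (hRcont.mono hsub) hRlt1 (forwardRate_exists_ne hcB.le hBx hF hrR hstrict hP4) hK.1 hK.2
  have hY' : ∀ x > 0, Y x r = (∫ t in 0..x, g (B t)) / x := fun x hx => by
    rw [hY, hA, integral_forwardRate_comp hx.le hBode hBrange hB0
      (hFcont.mono Ioc_subset_Icc_self) (hRcont.mono Ioc_subset_Icc_self)]
  have hgB : ContinuousOn (fun t => g (B t)) (Ici 0) :=
    hgcont.comp (fun t ht => (hBode t ht).continuousAt.continuousWithinAt)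
      fun t ht => Ioc_subset_Icc_self (hBrange t ht)
  intro a ha b hb hab
  simpa only [hY' a ha, hY' b hb] using strictMonoOn_integral_div_self hgB hfwd ha hb hab

/-- If `r ≤ b_y-norm = (1/c)·∫_c^0 (F u − F c)/(R u − 1) du` and the case
hypothesis (P4) holds, then the yield curve `x ↦ Y x r` is strictly increasing on `(0,∞)`
(the yield curve is normal). -/
theorem yield_curve_normal
    (c : ℝ) (hc : c < 0)
    (F R : ℝ → ℝ) (ε : ℝ) (hε : 0 < ε)
    (hFconv : ConvexOn ℝ (Set.Ioo (c - ε) ε) F)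
    (hRconv : ConvexOn ℝ (Set.Ioo (c - ε) ε) R)
    (hFC1 : ContDiffOn ℝ 1 F (Set.Ioo (c - ε) ε))
    (hRC1 : ContDiffOn ℝ 1 R (Set.Ioo (c - ε) ε))
    (hF0 : F 0 = 0) (hR0 : R 0 = 0) (hRc : R c = 1)
    (hRlt1 : ∀ u ∈ Set.Ioc c 0, R u < 1)
    (hR'c : deriv R c < 0)
    (hFne : ∃ u ∈ Set.Icc c 0, F u ≠ 0)
    (hstrict : StrictConvexOn ℝ (Set.Icc c 0) F ∨ StrictConvexOn ℝ (Set.Icc c 0) R)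
    (B : ℝ → ℝ) (hB0 : B 0 = 0)
    (hBode : ∀ x ≥ (0:ℝ), HasDerivAt B (R (B x) - 1) x)
    (hBanti : StrictAntiOn B (Set.Ici 0))
    (hBrange : ∀ x ≥ (0:ℝ), B x ∈ Set.Ioc c 0)
    (hBlim : Tendsto B atTop (nhds c))
    (A : ℝ → ℝ) (hA : ∀ x, A x = ∫ s in (0:ℝ)..x, F (B s))
    (r : ℝ) (Y : ℝ → ℝ → ℝ)
    (hY : ∀ x r', Y x r' = -(A x + r' * B x) / x)
    (hP4 : (0 ≤ r ∧ 0 < deriv F 0) ∨ (∀ u, R u = u / c))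
    (hr : r ≤ (1 / c) * ∫ u in c..(0:ℝ), (F u - F c) / (R u - 1)) :
    StrictMonoOn (fun x => Y x r) (Set.Ioi 0) :=
  yield_curve_normal_general c hc F R ε hε hFconv hRconv hR0 hRc hRlt1 hstrict B hB0 hBode hBanti
    hBrange A hA r Y hY hP4 hr
end

section
/- Suppose r > b_y-norm = (1/c)·∫_c^0 (F(u) − F(c))/(R(u) − 1) du, suppose that R'(0) < 0 implies r < −F'(0)/R'(0), and suppose the case hypothesis (P4) holds. Then the yield curve x ↦ Y(x,r) is humped: there exists a unique x* ∈ (0,∞) such that Y(·,r) is strictly increasing on (0,x*] and strictly decreasing on [x*,∞); in particular Y(·,r) has exactly one local maximum and no local minimum on (0,∞). -/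
/-!
Put `G(x) = x² ∂ₓY(x, r) = A + r B - x (F(B) + r (R(B) - 1))`. Then `G(0) = 0` and
`G'(x) = x (1 - R(B x)) φ(B x)` with `φ = F' + r R'`. Under (P4) `φ` is nondecreasing, so
`φ ∘ B` is nonincreasing, and it is positive near `0` because `φ(0) > 0`. Hence `G` is positive
at first and, as soon as it is nonpositive somewhere, `φ ∘ B` is already negative there, so `G`
decreases strictly from then on. The substitution `u = B(s)` gives
`A(x) = x F(c) + ∫₀^{B x} (F u - F c) / (R u - 1) du`, and convexity of `R` gives
`B' ≤ (B - c) / c`, so `B - c` decays exponentially; together these yield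
`G(x) → r c - ∫_c^0 (F u - F c) / (R u - 1) du`, which is negative exactly when `r > b_y-norm`.
So `G`, and with it `∂ₓY`, changes sign exactly once.
-/

open Filter Set Topology MeasureTheory

theorem hasDerivWithinAt_integral_Ici {g : ℝ → ℝ} {a x : ℝ} (hg : ContinuousOn g (Ici a))
    (hx : a ≤ x) : HasDerivWithinAt (fun y => ∫ s in a..y, g s) (g x) (Ici a) x := by
  have : Fact (x ∈ Icc a (x + 1)) := ⟨hx, by linarith⟩
  have hIcc : Icc a (x + 1) ∈ 𝓝[Ici a] x := by
    rw [← Ici_inter_Iic]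
    exact inter_mem_nhdsWithin _ (Iic_mem_nhds (by linarith))
  have hg' : ContinuousOn g (Icc a (x + 1)) := hg.mono Icc_subset_Ici_self
  refine (intervalIntegral.integral_hasDerivWithinAt_right (s := Icc a (x + 1))
    (t := Icc a (x + 1)) ?_ (hg'.stronglyMeasurableAtFilter_nhdsWithin measurableSet_Icc x)
    (hg' x this.out)).mono_of_mem_nhdsWithin hIcc
  exact (hg.mono Icc_subset_Ici_self).intervalIntegrable_of_Icc hx

theorem le_mul_exp_of_hasDerivAt_le {g g' : ℝ → ℝ} {K : ℝ}
    (hg : ∀ x ≥ 0, HasDerivAt g (g' x) x) (hle : ∀ x ≥ 0, g' x ≤ K * g x) :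
    ∀ x ≥ 0, g x ≤ g 0 * Real.exp (K * x) := by
  intro x hx
  simpa [gronwallBound_ε0] using le_gronwallBound_of_liminf_deriv_right_le (ε := 0)
    (fun y hy => (hg y hy.1).continuousAt.continuousWithinAt)
    (fun y hy _ hr => (hg y hy.1).hasDerivWithinAt.liminf_right_slope_le hr) le_rfl
    (fun y hy => by simpa using hle y hy.1) x ⟨hx, le_rfl⟩

theorem tendsto_mul_of_nonneg_of_le_exp {g : ℝ → ℝ} {C k : ℝ} (hk : 0 < k)
    (hg₀ : ∀ᶠ x in atTop, 0 ≤ g x) (hg : ∀ᶠ x in atTop, g x ≤ C * Real.exp (-k * x)) :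
    Tendsto (fun x => x * g x) atTop (𝓝 0) := by
  have hexp : Tendsto (fun x => C * (x * Real.exp (-k * x))) atTop (𝓝 0) := by
    simpa using (tendsto_rpow_mul_exp_neg_mul_atTop_nhds_zero 1 k hk).const_mul C
  refine tendsto_of_tendsto_of_tendsto_of_le_of_le' tendsto_const_nhds hexp ?_ ?_
  · filter_upwards [hg₀, eventually_ge_atTop 0] with x h₀ hx using mul_nonneg hx h₀
  · filter_upwards [hg, eventually_ge_atTop 0] with x h hx
    calc x * g x ≤ x * (C * Real.exp (-k * x)) := mul_le_mul_of_nonneg_left h hx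
      _ = C * (x * Real.exp (-k * x)) := by ring

theorem LipschitzOnWith.tendsto_mul_sub_comp {α : Type*} {l : Filter α} {f : ℝ → ℝ}
    {K : NNReal} {s : Set ℝ} {a : ℝ} {g m : α → ℝ} (hf : LipschitzOnWith K f s) (ha : a ∈ s)
    (hgs : ∀ᶠ x in l, g x ∈ s) (hg : Tendsto (fun x => m x * (g x - a)) l (𝓝 0)) :
    Tendsto (fun x => m x * (f (g x) - f a)) l (𝓝 0) := by
  refine squeeze_zero_norm' ?_ (by simpa using (hg.norm.const_mul (K : ℝ)))
  filter_upwards [hgs] with x hx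
  simp only [norm_mul, Real.norm_eq_abs]
  calc |m x| * |f (g x) - f a| ≤ |m x| * (K * |g x - a|) :=
        mul_le_mul_of_nonneg_left (by simpa [Real.dist_eq] using hf.dist_le_mul (g x) hx a ha)
          (abs_nonneg _)
    _ = K * (|m x| * |g x - a|) := by ring

theorem sub_one_le_div_of_convexOn {R : ℝ → ℝ} {c : ℝ} (hc : c < 0)
    (hR : ConvexOn ℝ (Icc c 0) R) (hR0 : R 0 = 0) (hRc : R c = 1) {u : ℝ} (hu : u ∈ Icc c 0) :
    R u - 1 ≤ (u - c) / c := by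
  have hc0 : c ≠ 0 := hc.ne
  have h : R (u / c * c + (c - u) / c * 0) ≤ u / c * R c + (c - u) / c * R 0 :=
    hR.2 (left_mem_Icc.2 hc.le) (right_mem_Icc.2 hc.le) (div_nonneg_of_nonpos hu.2 hc.le)
      (div_nonneg_of_nonpos (by linarith [hu.1]) hc.le) (by field_simp; ring)
  simp only [hRc, hR0, div_mul_cancel₀ _ hc0, mul_zero, add_zero, mul_one] at h
  calc R u - 1 ≤ u / c - 1 := by linarith
    _ = (u - c) / c := by field_simp

theorem strictMonoOn_Ioc_and_strictAntiOn_Ici_of_hasDerivAt {f f' : ℝ → ℝ} {a x₀ : ℝ}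
    (hx₀ : a < x₀) (hf : ∀ x > a, HasDerivAt f (f' x) x) (hpos : ∀ x ∈ Ioo a x₀, 0 < f' x)
    (hneg : ∀ x > x₀, f' x < 0) :
    StrictMonoOn f (Ioc a x₀) ∧ StrictAntiOn f (Ici x₀) := by
  have hcont : ContinuousOn f (Ioi a) := fun x hx => (hf x hx).continuousAt.continuousWithinAt
  constructor
  · refine strictMonoOn_of_hasDerivWithinAt_pos (f' := f') (convex_Ioc a x₀)
      (hcont.mono Ioc_subset_Ioi_self) (fun x hx => ?_) (fun x hx => ?_)
    all_goals rw [interior_Ioc] at hx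
    exacts [(hf x hx.1).hasDerivWithinAt, hpos x hx]
  · refine strictAntiOn_of_hasDerivWithinAt_neg (f' := f') (convex_Ici x₀)
      (hcont.mono (Ici_subset_Ioi.2 hx₀)) (fun x hx => ?_) (fun x hx => ?_)
    all_goals rw [interior_Ici] at hx
    exacts [(hf x (hx₀.trans hx)).hasDerivWithinAt, hneg x hx]

theorem le_of_strictMonoOn_Ioc_of_strictAntiOn_Ici {f : ℝ → ℝ} {a x y : ℝ} (hy : a < y)
    (hx : StrictMonoOn f (Ioc a x)) (hy' : StrictAntiOn f (Ici y)) : x ≤ y := by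
  by_contra! hyx
  exact (hx ⟨hy, hyx.le⟩ ⟨hy.trans hyx, le_rfl⟩ hyx).asymm (hy' self_mem_Ici hyx.le hyx)

section SignChange

variable {G w q : ℝ → ℝ}

theorem pos_of_hasDerivAt_mul_antitoneOn (hGc : ContinuousOn G (Ici 0)) (hG0 : G 0 = 0)
    (hG' : ∀ x > 0, HasDerivAt G (w x * q x) x) (hw : ∀ x > 0, 0 < w x)
    (hq : AntitoneOn q (Ioi 0)) {δ z : ℝ} (hδ : 0 < δ) (hqδ : 0 < q δ) (hz : 0 < z)
    (hqz : 0 ≤ q z) : 0 < G z := by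
  set m := min δ z
  have hm : 0 < m := lt_min hδ hz
  have hstrict : StrictMonoOn G (Icc 0 m) := by
    refine strictMonoOn_of_hasDerivWithinAt_pos (f' := fun x => w x * q x) (convex_Icc 0 m)
      (hGc.mono Icc_subset_Ici_self) (fun x hx => ?_) (fun x hx => ?_)
    all_goals simp only [interior_Icc] at hx ⊢
    exacts [(hG' x hx.1).hasDerivWithinAt,
      mul_pos (hw x hx.1) (hqδ.trans_le (hq hx.1 hδ (hx.2.le.trans (min_le_left _ _))))]
  have hmono : MonotoneOn G (Icc 0 z) := by
    refine monotoneOn_of_hasDerivWithinAt_nonneg (f' := fun x => w x * q x) (convex_Icc 0 z)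
      (hGc.mono Icc_subset_Ici_self) (fun x hx => ?_) (fun x hx => ?_)
    all_goals simp only [interior_Icc] at hx ⊢
    exacts [(hG' x hx.1).hasDerivWithinAt,
      mul_nonneg (hw x hx.1).le (hqz.trans (hq hx.1 hz hx.2.le))]
  calc 0 = G 0 := hG0.symm
    _ < G m := hstrict (left_mem_Icc.2 hm.le) (right_mem_Icc.2 hm.le) hm
    _ ≤ G z := hmono ⟨hm.le, min_le_right _ _⟩ ⟨hz.le, le_rfl⟩ (min_le_right _ _)

theorem exists_pos_neg_of_hasDerivAt_mul_antitoneOn (hGc : ContinuousOn G (Ici 0))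
    (hG0 : G 0 = 0) (hG' : ∀ x > 0, HasDerivAt G (w x * q x) x) (hw : ∀ x > 0, 0 < w x)
    (hq : AntitoneOn q (Ioi 0)) (hqδ : ∃ δ > 0, 0 < q δ) (hGneg : ∀ᶠ x in atTop, G x < 0) :
    ∃ x₀ > 0, (∀ x ∈ Ioo 0 x₀, 0 < G x) ∧ ∀ x > x₀, G x < 0 := by
  obtain ⟨δ, hδ, hqδ⟩ := hqδ
  have hpos {z : ℝ} (hz : 0 < z) (hqz : 0 ≤ q z) : 0 < G z :=
    pos_of_hasDerivAt_mul_antitoneOn hGc hG0 hG' hw hq hδ hqδ hz hqz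
  have hanti {z : ℝ} (hz : 0 < z) (hGz : G z ≤ 0) : StrictAntiOn G (Ici z) := by
    have hqz : q z < 0 := not_le.1 fun hqz => (hpos hz hqz).not_ge hGz
    refine strictAntiOn_of_hasDerivWithinAt_neg (f' := fun x => w x * q x) (convex_Ici z)
      (hGc.mono (Ici_subset_Ici.2 hz.le)) (fun x hx => ?_) (fun x hx => ?_)
    all_goals simp only [interior_Ici] at hx ⊢
    exacts [(hG' x (hz.trans hx)).hasDerivWithinAt,
      mul_neg_of_pos_of_neg (hw x (hz.trans hx)) ((hq hz (hz.trans hx) hx.le).trans_lt hqz)]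
  set Z := {z | 0 < z ∧ G z ≤ 0}
  have hZ : Z.Nonempty := by
    obtain ⟨z, hz, hGz⟩ := ((eventually_gt_atTop 0).and hGneg).exists
    exact ⟨z, hz, hGz.le⟩
  have hδZ : δ ≤ sInf Z := le_csInf hZ fun z ⟨hz, hGz⟩ => not_lt.1 fun hzδ =>
    (hpos hz (hqδ.le.trans (hq hz hδ hzδ.le))).not_ge hGz
  refine ⟨sInf Z, hδ.trans_le hδZ, fun x hx => ?_, fun x hx => ?_⟩
  · by_contra! hGx
    exact hx.2.not_ge (csInf_le ⟨0, fun z hz => hz.1.le⟩ ⟨hx.1, hGx⟩)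
  · obtain ⟨z, ⟨hz, hGz⟩, hzx⟩ := exists_lt_of_csInf_lt hZ hx
    exact (hanti hz hGz self_mem_Ici hzx.le hzx).trans_le hGz

end SignChange

/-- The integrand of `b_y-norm = c⁻¹ ∫_c^0 secantRatio F R c u du`. -/
noncomputable def secantRatio (F R : ℝ → ℝ) (c u : ℝ) : ℝ := (F u - F c) / (R u - 1)

/-- `x² ∂ₓY(x, r)`, see `hasDerivAt_yield`. -/
def yieldSlopeNumerator (F R A B : ℝ → ℝ) (r x : ℝ) : ℝ :=
  A x + r * B x - x * (F (B x) + r * (R (B x) - 1))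

section YieldCurve

variable {c r : ℝ} {F R A B : ℝ → ℝ}

theorem tendsto_mul_sub_atTop_of_hasDerivAt (hc : c < 0)
    (hchord : ∀ u ∈ Icc c 0, R u - 1 ≤ (u - c) / c) (hB0 : B 0 = 0)
    (hBode : ∀ x ≥ 0, HasDerivAt B (R (B x) - 1) x) (hBrange : ∀ x ≥ 0, B x ∈ Ioc c 0) :
    Tendsto (fun x => x * (B x - c)) atTop (𝓝 0) := by
  have hdecay : ∀ x ≥ 0, B x - c ≤ -c * Real.exp (-(-c⁻¹) * x) := by
    have := le_mul_exp_of_hasDerivAt_le (g := fun x => B x - c) (K := c⁻¹)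
      (fun x hx => (hBode x hx).sub_const c) fun x hx => by
        simpa only [div_eq_inv_mul] using hchord _ (Ioc_subset_Icc_self (hBrange x hx))
    simpa [hB0] using this
  exact tendsto_mul_of_nonneg_of_le_exp (neg_pos.2 (inv_lt_zero.2 hc))
    ((eventually_ge_atTop 0).mono fun x hx => sub_nonneg.2 (hBrange x hx).1.le)
    ((eventually_ge_atTop 0).mono hdecay)

theorem continuousOn_secantRatio (hF : ContinuousOn F (Icc c 0)) (hR : ContinuousOn R (Icc c 0))
    (hRlt : ∀ u ∈ Ioc c 0, R u < 1) : ContinuousOn (secantRatio F R c) (Ioc c 0) :=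
  ((hF.sub continuousOn_const).mono Ioc_subset_Icc_self).div
    ((hR.sub continuousOn_const).mono Ioc_subset_Icc_self) fun u hu => by linarith [hRlt u hu]

theorem integrableOn_secantRatio {K : NNReal} (hc : c < 0) (hF : LipschitzOnWith K F (Icc c 0))
    (hR : ContinuousOn R (Icc c 0)) (hRlt : ∀ u ∈ Ioc c 0, R u < 1)
    (hchord : ∀ u ∈ Icc c 0, R u - 1 ≤ (u - c) / c) :
    IntegrableOn (secantRatio F R c) (Ioc c 0) := by
  have hbound : ∀ u ∈ Ioc c 0, ‖secantRatio F R c u‖ ≤ K * -c := fun u hu => by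
    have hRu : 0 < 1 - R u := sub_pos.2 (hRlt u hu)
    have hgap : u - c ≤ -c * (1 - R u) := by
      have := hchord u (Ioc_subset_Icc_self hu)
      rw [le_div_iff_of_neg hc] at this
      linarith
    rw [secantRatio, norm_div, Real.norm_eq_abs, Real.norm_eq_abs, abs_sub_comm (R u),
      abs_of_pos hRu, div_le_iff₀ hRu]
    calc |F u - F c| ≤ K * (u - c) := by
          simpa [Real.dist_eq, abs_of_pos (sub_pos.2 hu.1)] using
            hF.dist_le_mul u (Ioc_subset_Icc_self hu) c (left_mem_Icc.2 hc.le)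
      _ ≤ K * (-c * (1 - R u)) := by gcongr
      _ = K * -c * (1 - R u) := by ring
  exact Integrable.mono' (integrableOn_const measure_Ioc_lt_top.ne)
    ((continuousOn_secantRatio hF.continuousOn hR hRlt).aestronglyMeasurable measurableSet_Ioc)
    ((ae_restrict_iff' measurableSet_Ioc).2 (ae_of_all _ hbound))

theorem integral_comp_eq_mul_add_integral_secantRatio (hF : ContinuousOn F (Icc c 0))
    (hR : ContinuousOn R (Icc c 0)) (hRlt : ∀ u ∈ Ioc c 0, R u < 1) (hB0 : B 0 = 0)
    (hBode : ∀ x ≥ 0, HasDerivAt B (R (B x) - 1) x) (hBrange : ∀ x ≥ 0, B x ∈ Ioc c 0)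
    {x : ℝ} (hx : 0 ≤ x) :
    ∫ s in 0..x, F (B s) = x * F c + ∫ u in 0..B x, secantRatio F R c u := by
  have hBc : ContinuousOn B (Icc 0 x) :=
    fun s hs => (hBode s hs.1).continuousAt.continuousWithinAt
  have hmaps : MapsTo B (Icc 0 x) (Ioc c 0) := fun s hs => hBrange s hs.1
  have hsubst : ∫ s in 0..x, (secantRatio F R c ∘ B) s * (R (B s) - 1) =
      ∫ u in B 0..B x, secantRatio F R c u := by
    refine intervalIntegral.integral_comp_mul_deriv' (fun s hs => ?_) ?_ ?_
    · rw [uIcc_of_le hx] at hs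
      exact hBode s hs.1
    · rw [uIcc_of_le hx]
      exact ((hR.mono Ioc_subset_Icc_self).comp hBc hmaps).sub continuousOn_const
    · rw [uIcc_of_le hx]
      exact (continuousOn_secantRatio hF hR hRlt).mono hmaps.image_subset
  have hcancel : ∀ s ∈ uIcc 0 x, (secantRatio F R c ∘ B) s * (R (B s) - 1) = F (B s) - F c :=
    fun s hs => by
      rw [uIcc_of_le hx] at hs
      exact div_mul_cancel₀ _ (sub_ne_zero.2 (hRlt _ (hmaps hs)).ne)
  have hFB : IntervalIntegrable (fun s => F (B s)) volume 0 x :=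
    ((hF.mono Ioc_subset_Icc_self).comp hBc hmaps).intervalIntegrable_of_Icc hx
  rw [intervalIntegral.integral_congr hcancel, hB0, intervalIntegral.integral_sub hFB
    intervalIntegrable_const, intervalIntegral.integral_const, smul_eq_mul] at hsubst
  linarith

theorem tendsto_yieldSlopeNumerator_atTop (hc : c < 0) (hF : ContDiffOn ℝ 1 F (Icc c 0))
    (hR : ContDiffOn ℝ 1 R (Icc c 0)) (hRconv : ConvexOn ℝ (Icc c 0) R) (hR0 : R 0 = 0)
    (hRc : R c = 1) (hRlt : ∀ u ∈ Ioc c 0, R u < 1) (hA : ∀ x, A x = ∫ s in 0..x, F (B s))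
    (hB0 : B 0 = 0) (hBode : ∀ x ≥ 0, HasDerivAt B (R (B x) - 1) x)
    (hBrange : ∀ x ≥ 0, B x ∈ Ioc c 0) (hBlim : Tendsto B atTop (𝓝 c)) :
    Tendsto (yieldSlopeNumerator F R A B r) atTop
      (𝓝 (r * c - ∫ u in c..0, secantRatio F R c u)) := by
  obtain ⟨K, hFK⟩ := hF.exists_lipschitzOnWith one_ne_zero (convex_Icc c 0) isCompact_Icc
  obtain ⟨L, hRL⟩ := hR.exists_lipschitzOnWith one_ne_zero (convex_Icc c 0) isCompact_Icc
  have hchord : ∀ u ∈ Icc c 0, R u - 1 ≤ (u - c) / c :=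
    fun u hu => sub_one_le_div_of_convexOn hc hRconv hR0 hRc hu
  have hxB := tendsto_mul_sub_atTop_of_hasDerivAt hc hchord hB0 hBode hBrange
  have hBs : ∀ᶠ x in atTop, B x ∈ Icc c 0 :=
    (eventually_ge_atTop 0).mono fun x hx => Ioc_subset_Icc_self (hBrange x hx)
  have hc' : c ∈ Icc c 0 := left_mem_Icc.2 hc.le
  have hΦ : Tendsto (fun x => ∫ u in 0..B x, secantRatio F R c u) atTop
      (𝓝 (∫ u in 0..c, secantRatio F R c u)) := by
    have hint : IntervalIntegrable (secantRatio F R c) volume c 0 :=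
      (intervalIntegrable_iff_integrableOn_Ioc_of_le hc.le).2
        (integrableOn_secantRatio hc hFK hR.continuousOn hRlt hchord)
    have hprim := intervalIntegral.continuousOn_primitive_interval' hint right_mem_uIcc
    rw [uIcc_of_le hc.le] at hprim
    exact (hprim c hc').tendsto.comp (tendsto_nhdsWithin_iff.2 ⟨hBlim, hBs⟩)
  have hlim := ((hΦ.add (hBlim.const_mul r)).sub
    (hFK.tendsto_mul_sub_comp (m := id) hc' hBs hxB)).sub
      ((hRL.tendsto_mul_sub_comp (m := id) hc' hBs hxB).const_mul r)
  rw [intervalIntegral.integral_symm, hRc, mul_zero, sub_zero, sub_zero, neg_add_eq_sub] at hlim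
  refine hlim.congr' ((eventually_ge_atTop 0).mono fun x hx => ?_)
  rw [yieldSlopeNumerator, hA, integral_comp_eq_mul_add_integral_secantRatio hF.continuousOn
    hR.continuousOn hRlt hB0 hBode hBrange hx]
  simp only [id]
  ring

theorem hasDerivWithinAt_yieldSlopeNumerator {s : Set ℝ} {x : ℝ}
    (hA : HasDerivWithinAt A (F (B x)) s x) (hB : HasDerivWithinAt B (R (B x) - 1) s x)
    (hF : DifferentiableAt ℝ F (B x)) (hR : DifferentiableAt ℝ R (B x)) :
    HasDerivWithinAt (yieldSlopeNumerator F R A B r)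
      (x * (1 - R (B x)) * (deriv F (B x) + r * deriv R (B x))) s x := by
  have hFB := hF.hasDerivAt.comp_hasDerivWithinAt x hB
  have hRB := hR.hasDerivAt.comp_hasDerivWithinAt x hB
  refine ((hA.add (hB.const_mul r)).sub
    ((hasDerivWithinAt_id x s).mul (hFB.add ((hRB.sub_const 1).const_mul r)))).congr_deriv ?_
  simp only [id, Function.comp, Pi.add_apply]
  ring

theorem hasDerivAt_yield {x : ℝ} (hx : x ≠ 0) (hA : HasDerivAt A (F (B x)) x)
    (hB : HasDerivAt B (R (B x) - 1) x) :
    HasDerivAt (fun y => -(A y + r * B y) / y) (yieldSlopeNumerator F R A B r x / x ^ 2) x := by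
  refine ((hA.add (hB.const_mul r)).neg.div (hasDerivAt_id x) hx).congr_deriv ?_
  simp only [yieldSlopeNumerator, id, Pi.add_apply, Pi.neg_apply]
  field_simp
  ring

theorem monotoneOn_deriv_add_mul_deriv {S : Set ℝ} (hF : ConvexOn ℝ S F) (hR : ConvexOn ℝ S R)
    (hFd : ∀ u ∈ S, DifferentiableAt ℝ F u) (hRd : ∀ u ∈ S, DifferentiableAt ℝ R u)
    (hr : 0 ≤ r ∨ ∀ u, R u = u / c) : MonotoneOn (fun u => deriv F u + r * deriv R u) S := by
  rcases hr with hr | hlin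
  · exact fun u hu v hv huv => add_le_add (hF.monotoneOn_deriv hFd hu hv huv)
      (mul_le_mul_of_nonneg_left (hR.monotoneOn_deriv hRd hu hv huv) hr)
  · have : deriv R = fun _ => c⁻¹ := by
      rw [funext hlin]
      funext u
      simp
    simp only [this]
    exact (hF.monotoneOn_deriv hFd).add_const _

theorem deriv_add_mul_deriv_pos (hc : c < 0)
    (hP4 : (0 ≤ r ∧ 0 < deriv F 0) ∨ ∀ u, R u = u / c)
    (hrinv : deriv R 0 < 0 → r < -deriv F 0 / deriv R 0) : 0 < deriv F 0 + r * deriv R 0 := by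
  have hneg (h : deriv R 0 < 0) : 0 < deriv F 0 + r * deriv R 0 := by
    have := hrinv h
    rw [lt_div_iff_of_neg h] at this
    linarith
  rcases hP4 with ⟨hr, hF'⟩ | hlin
  · rcases lt_or_ge (deriv R 0) 0 with h | h
    · exact hneg h
    · linarith [mul_nonneg hr h]
  · refine hneg ?_
    rw [funext hlin]
    simpa using hc

theorem exists_pos_deriv_add_mul_deriv_comp {U : Set ℝ} (hU : IsOpen U) (h0 : 0 ∈ U)
    (hF : ContDiffOn ℝ 1 F U) (hR : ContDiffOn ℝ 1 R U) (hB : ContinuousAt B 0) (hB0 : B 0 = 0)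
    (hpos : 0 < deriv F 0 + r * deriv R 0) :
    ∃ δ > 0, 0 < deriv F (B δ) + r * deriv R (B δ) := by
  have hderiv {f : ℝ → ℝ} (hf : ContDiffOn ℝ 1 f U) : ContinuousAt (deriv f) 0 :=
    (hf.continuousOn_deriv_of_isOpen hU le_rfl).continuousAt (hU.mem_nhds h0)
  have hq : ContinuousWithinAt (fun x => deriv F (B x) + r * deriv R (B x)) (Ioi 0) 0 := by
    refine ContinuousAt.comp_continuousWithinAt (g := fun u => deriv F u + r * deriv R u) ?_
      hB.continuousWithinAt
    rw [hB0]
    exact (hderiv hF).add (continuousAt_const.mul (hderiv hR))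
  have hq0 : 0 < deriv F (B 0) + r * deriv R (B 0) := by rwa [hB0]
  obtain ⟨δ, hqδ, hδ⟩ :=
    ((hq.eventually (eventually_gt_nhds hq0)).and self_mem_nhdsWithin).exists
  exact ⟨δ, hδ, hqδ⟩

theorem hasDerivWithinAt_Ici_of_eq_integral (hF : ContinuousOn F (Icc c 0))
    (hA : ∀ x, A x = ∫ s in 0..x, F (B s)) (hBode : ∀ x ≥ 0, HasDerivAt B (R (B x) - 1) x)
    (hBrange : ∀ x ≥ 0, B x ∈ Ioc c 0) {x : ℝ} (hx : 0 ≤ x) :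
    HasDerivWithinAt A (F (B x)) (Ici 0) x := by
  rw [funext hA]
  exact hasDerivWithinAt_integral_Ici
    (hF.comp (fun x hx => (hBode x hx).continuousAt.continuousWithinAt)
      fun x hx => Ioc_subset_Icc_self (hBrange x hx)) hx

theorem exists_pos_neg_yieldSlopeNumerator {U : Set ℝ} (hU : IsOpen U) (hcU : Icc c 0 ⊆ U)
    (hc : c < 0) (hFconv : ConvexOn ℝ U F) (hRconv : ConvexOn ℝ U R) (hF : ContDiffOn ℝ 1 F U)
    (hR : ContDiffOn ℝ 1 R U) (hR0 : R 0 = 0) (hRc : R c = 1) (hRlt : ∀ u ∈ Ioc c 0, R u < 1)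
    (hA : ∀ x, A x = ∫ s in 0..x, F (B s)) (hB0 : B 0 = 0)
    (hBode : ∀ x ≥ 0, HasDerivAt B (R (B x) - 1) x) (hBanti : AntitoneOn B (Ici 0))
    (hBrange : ∀ x ≥ 0, B x ∈ Ioc c 0) (hBlim : Tendsto B atTop (𝓝 c))
    (hP4 : (0 ≤ r ∧ 0 < deriv F 0) ∨ ∀ u, R u = u / c)
    (hrinv : deriv R 0 < 0 → r < -deriv F 0 / deriv R 0)
    (hr : 1 / c * ∫ u in c..0, secantRatio F R c u < r) :
    ∃ x₀ > 0, (∀ x ∈ Ioo 0 x₀, 0 < yieldSlopeNumerator F R A B r x) ∧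
      ∀ x > x₀, yieldSlopeNumerator F R A B r x < 0 := by
  have hFd : ∀ u ∈ U, DifferentiableAt ℝ F u := fun u hu =>
    (hF.differentiableOn one_ne_zero).differentiableAt (hU.mem_nhds hu)
  have hRd : ∀ u ∈ U, DifferentiableAt ℝ R u := fun u hu =>
    (hR.differentiableOn one_ne_zero).differentiableAt (hU.mem_nhds hu)
  have hBU : ∀ x ≥ 0, B x ∈ U := fun x hx => hcU (Ioc_subset_Icc_self (hBrange x hx))
  have hG' : ∀ x ≥ 0, HasDerivWithinAt (yieldSlopeNumerator F R A B r)
      (x * (1 - R (B x)) * (deriv F (B x) + r * deriv R (B x))) (Ici 0) x := fun x hx =>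
    hasDerivWithinAt_yieldSlopeNumerator
      (hasDerivWithinAt_Ici_of_eq_integral (hF.continuousOn.mono hcU) hA hBode hBrange hx)
      (hBode x hx).hasDerivWithinAt (hFd _ (hBU x hx)) (hRd _ (hBU x hx))
  have hGneg : ∀ᶠ x in atTop, yieldSlopeNumerator F R A B r x < 0 := by
    refine (tendsto_yieldSlopeNumerator_atTop hc (hF.mono hcU) (hR.mono hcU)
      (hRconv.subset hcU (convex_Icc c 0)) hR0 hRc hRlt hA hB0 hBode hBrange
      hBlim).eventually_lt_const ?_
    have h := mul_lt_mul_of_neg_right hr hc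
    rwa [one_div_mul_eq_div, div_mul_cancel₀ _ hc.ne, ← sub_neg] at h
  have hq : AntitoneOn (fun x => deriv F (B x) + r * deriv R (B x)) (Ioi 0) :=
    fun x hx y hy hxy => monotoneOn_deriv_add_mul_deriv hFconv hRconv hFd hRd
      (hP4.imp_left And.left) (hBU y (le_of_lt hy)) (hBU x (le_of_lt hx))
      (hBanti (Ioi_subset_Ici_self hx) (Ioi_subset_Ici_self hy) hxy)
  refine exists_pos_neg_of_hasDerivAt_mul_antitoneOn
    (fun x hx => (hG' x hx).continuousWithinAt) (by simp [yieldSlopeNumerator, hA, hB0])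
    (fun x hx => (hG' x hx.le).hasDerivAt (Ici_mem_nhds hx))
    (fun x hx => mul_pos hx (sub_pos.2 (hRlt _ (hBrange x hx.le)))) hq ?_ hGneg
  exact exists_pos_deriv_add_mul_deriv_comp hU (hcU (right_mem_Icc.2 hc.le)) hF hR
    (hBode 0 le_rfl).continuousAt hB0 (deriv_add_mul_deriv_pos hc hP4 hrinv)

end YieldCurve

theorem yield_curve_humped_general
(c : ℝ) (hc : c < 0)
    (F R : ℝ → ℝ) (ε : ℝ) (hε : 0 < ε)
    (hFconv : ConvexOn ℝ (Set.Ioo (c - ε) ε) F)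
    (hRconv : ConvexOn ℝ (Set.Ioo (c - ε) ε) R)
    (hFC1 : ContDiffOn ℝ 1 F (Set.Ioo (c - ε) ε))
    (hRC1 : ContDiffOn ℝ 1 R (Set.Ioo (c - ε) ε))
    (hR0 : R 0 = 0) (hRc : R c = 1)
    (hRlt1 : ∀ u ∈ Set.Ioc c 0, R u < 1)
    (B : ℝ → ℝ) (hB0 : B 0 = 0)
    (hBode : ∀ x ≥ (0:ℝ), HasDerivAt B (R (B x) - 1) x)
    (hBanti : StrictAntiOn B (Set.Ici 0))
    (hBrange : ∀ x ≥ (0:ℝ), B x ∈ Set.Ioc c 0)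
    (hBlim : Tendsto B atTop (nhds c))
    (A : ℝ → ℝ) (hA : ∀ x, A x = ∫ s in (0:ℝ)..x, F (B s))
    (r : ℝ) (Y : ℝ → ℝ → ℝ)
    (hY : ∀ x r', Y x r' = -(A x + r' * B x) / x)
    (hP4 : (0 ≤ r ∧ 0 < deriv F 0) ∨ (∀ u, R u = u / c))
    (hr : (1 / c) * (∫ u in c..(0:ℝ), (F u - F c) / (R u - 1)) < r)
    (hrinv : deriv R 0 < 0 → r < -(deriv F 0) / deriv R 0) :
    ∃! xstar : ℝ, 0 < xstar ∧
      StrictMonoOn (fun x => Y x r) (Set.Ioc 0 xstar) ∧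
      StrictAntiOn (fun x => Y x r) (Set.Ici xstar) := by
  have hU : Icc c 0 ⊆ Ioo (c - ε) ε := fun u hu => ⟨by linarith [hu.1], hu.2.trans_lt hε⟩
  obtain ⟨x₀, hx₀, hpos, hneg⟩ := exists_pos_neg_yieldSlopeNumerator isOpen_Ioo hU hc hFconv
    hRconv hFC1 hRC1 hR0 hRc hRlt1 hA hB0 hBode hBanti.antitoneOn hBrange hBlim hP4 hrinv hr
  have hY' : ∀ x > 0, HasDerivAt (fun x => Y x r) (yieldSlopeNumerator F R A B r x / x ^ 2) x :=
    fun x hx => by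
      simp only [hY]
      exact hasDerivAt_yield hx.ne'
        ((hasDerivWithinAt_Ici_of_eq_integral (hFC1.continuousOn.mono hU) hA hBode hBrange
          hx.le).hasDerivAt (Ici_mem_nhds hx)) (hBode x hx.le)
  obtain ⟨hmono, hanti⟩ := strictMonoOn_Ioc_and_strictAntiOn_Ici_of_hasDerivAt hx₀ hY'
    (fun x hx => div_pos (hpos x hx) (pow_pos hx.1 2))
    (fun x hx => div_neg_of_neg_of_pos (hneg x hx) (pow_pos (hx₀.trans hx) 2))
  exact ⟨x₀, ⟨hx₀, hmono, hanti⟩, fun y ⟨hy, hym, hya⟩ =>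
    le_antisymm (le_of_strictMonoOn_Ioc_of_strictAntiOn_Ici hx₀ hym hanti)
      (le_of_strictMonoOn_Ioc_of_strictAntiOn_Ici hy hmono hya)⟩

/-- If `b_y-norm < r`, and `R'(0) < 0` implies `r < −F'(0)/R'(0)`, and (P4)
holds, then the yield curve is humped: there is a unique `x⋆ ∈ (0,∞)` such that `Y (·, r)`
is strictly increasing on `(0, x⋆]` and strictly decreasing on `[x⋆, ∞)`. -/
theorem yield_curve_humped
(c : ℝ) (hc : c < 0)
    (F R : ℝ → ℝ) (ε : ℝ) (hε : 0 < ε)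
    (hFconv : ConvexOn ℝ (Set.Ioo (c - ε) ε) F)
    (hRconv : ConvexOn ℝ (Set.Ioo (c - ε) ε) R)
    (hFC1 : ContDiffOn ℝ 1 F (Set.Ioo (c - ε) ε))
    (hRC1 : ContDiffOn ℝ 1 R (Set.Ioo (c - ε) ε))
    (hF0 : F 0 = 0) (hR0 : R 0 = 0) (hRc : R c = 1)
    (hRlt1 : ∀ u ∈ Set.Ioc c 0, R u < 1)
    (hR'c : deriv R c < 0)
    (hFne : ∃ u ∈ Set.Icc c 0, F u ≠ 0)
    (hstrict : StrictConvexOn ℝ (Set.Icc c 0) F ∨ StrictConvexOn ℝ (Set.Icc c 0) R)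
    (B : ℝ → ℝ) (hB0 : B 0 = 0)
    (hBode : ∀ x ≥ (0:ℝ), HasDerivAt B (R (B x) - 1) x)
    (hBanti : StrictAntiOn B (Set.Ici 0))
    (hBrange : ∀ x ≥ (0:ℝ), B x ∈ Set.Ioc c 0)
    (hBlim : Tendsto B atTop (nhds c))
    (A : ℝ → ℝ) (hA : ∀ x, A x = ∫ s in (0:ℝ)..x, F (B s))
    (r : ℝ) (Y : ℝ → ℝ → ℝ)
    (hY : ∀ x r', Y x r' = -(A x + r' * B x) / x)
    (hP4 : (0 ≤ r ∧ 0 < deriv F 0) ∨ (∀ u, R u = u / c))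
    (hr : (1 / c) * (∫ u in c..(0:ℝ), (F u - F c) / (R u - 1)) < r)
    (hrinv : deriv R 0 < 0 → r < -(deriv F 0) / deriv R 0) :
    ∃! xstar : ℝ, 0 < xstar ∧
      StrictMonoOn (fun x => Y x r) (Set.Ioc 0 xstar) ∧
      StrictAntiOn (fun x => Y x r) (Set.Ici xstar) :=
  yield_curve_humped_general c hc F R ε hε hFconv hRconv hFC1 hRC1 hR0 hRc hRlt1 B hB0 hBode hBanti
    hBrange hBlim A hA r Y hY hP4 hr hrinv
end

section
/- If in addition R'(0) < 0, then the asymptotic long-term yield is strictly smaller than the inversion threshold: −F(c) < −F'(0)/R'(0). -/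
/-!
Convexity puts the tangent lines at `0` below `F` and `R`, so `F'(0) c ≤ F(c)` and
`R'(0) c ≤ R(c) = 1`, one of them strictly. Multiplying by `R'(0) < 0` gives
`F(c) R'(0) ≤ F'(0) (R'(0) c) ≤ F'(0)`, which is the claim; the second step needs `F'(0) ≥ 0`,
except when `R(u) = u / c`, where `R'(0) c = 1`.
-/

open Set

section Tangent

variable {S : Set ℝ} {f : ℝ → ℝ} {x y : ℝ}

lemma ConvexOn.add_deriv_mul_sub_le (hf : ConvexOn ℝ S f) (hx : x ∈ S) (hy : y ∈ S)
    (hxy : x < y) (hd : DifferentiableAt ℝ f y) :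
    f y + deriv f y * (x - y) ≤ f x := by
  have h := hf.slope_le_deriv hx hy hxy hd
  rw [slope_def_field, div_le_iff₀ (sub_pos.2 hxy)] at h
  linarith

lemma StrictConvexOn.add_deriv_mul_sub_lt (hf : StrictConvexOn ℝ S f) (hx : x ∈ S) (hy : y ∈ S)
    (hxy : x < y) (hd : DifferentiableAt ℝ f y) :
    f y + deriv f y * (x - y) < f x := by
  have h := hf.slope_lt_deriv hx hy hxy hd
  rw [slope_def_field, div_lt_iff₀ (sub_pos.2 hxy)] at h
  linarith

end Tangent

lemma deriv_mul_eq_one_of_forall_eq_div {R : ℝ → ℝ} {c : ℝ} (hc : c ≠ 0)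
    (hR : ∀ u, R u = u / c) (x : ℝ) :
    deriv R x * c = 1 := by
  rw [funext hR, deriv_div_const, deriv_id'', one_div_mul_cancel hc]

theorem asymp_lt_inv_general
(c : ℝ) (hc : c < 0)
    (F R : ℝ → ℝ) (ε : ℝ) (hε : 0 < ε)
    (hFconv : ConvexOn ℝ (Set.Ioo (c - ε) ε) F)
    (hRconv : ConvexOn ℝ (Set.Ioo (c - ε) ε) R)
    (hFC1 : ContDiffOn ℝ 1 F (Set.Ioo (c - ε) ε))
    (hRC1 : ContDiffOn ℝ 1 R (Set.Ioo (c - ε) ε))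
    (hF0 : F 0 = 0) (hR0 : R 0 = 0) (hRc : R c = 1)
    (hstrict : StrictConvexOn ℝ (Set.Icc c 0) F ∨ StrictConvexOn ℝ (Set.Icc c 0) R)
    (hF'0 : (¬ ∀ u, R u = u / c) → 0 < deriv F 0)
    (hR'0 : deriv R 0 < 0) :
    -F c < -(deriv F 0) / deriv R 0 := by
  have hc_mem : c ∈ Ioo (c - ε) ε := ⟨by linarith, by linarith⟩
  have h0_mem : (0 : ℝ) ∈ Ioo (c - ε) ε := ⟨by linarith, hε⟩
  have hc_Icc : c ∈ Icc c 0 := ⟨le_rfl, hc.le⟩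
  have h0_Icc : (0 : ℝ) ∈ Icc c 0 := ⟨hc.le, le_rfl⟩
  have hFd : DifferentiableAt ℝ F 0 :=
    (hFC1.differentiableOn one_ne_zero).differentiableAt (isOpen_Ioo.mem_nhds h0_mem)
  have hRd : DifferentiableAt ℝ R 0 :=
    (hRC1.differentiableOn one_ne_zero).differentiableAt (isOpen_Ioo.mem_nhds h0_mem)
  have hF_tan := hFconv.add_deriv_mul_sub_le hc_mem h0_mem hc hFd
  have hR_tan := hRconv.add_deriv_mul_sub_le hc_mem h0_mem hc hRd
  rw [hF0, sub_zero, zero_add] at hF_tan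
  rw [hR0, hRc, sub_zero, zero_add] at hR_tan
  rw [lt_div_iff_of_neg hR'0]
  rcases hstrict with hF | hR
  · have hF_lt := hF.add_deriv_mul_sub_lt hc_Icc h0_Icc hc hFd
    rw [hF0, sub_zero, zero_add] at hF_lt
    have hF'_scaled : deriv F 0 * (deriv R 0 * c) ≤ deriv F 0 := by
      by_cases hlin : ∀ u, R u = u / c
      · rw [deriv_mul_eq_one_of_forall_eq_div hc.ne hlin, mul_one]
      · exact mul_le_of_le_one_right (hF'0 hlin).le hR_tan
    linarith [mul_lt_mul_of_neg_right hF_lt hR'0]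
  · have hR_lt := hR.add_deriv_mul_sub_lt hc_Icc h0_Icc hc hRd
    rw [hR0, hRc, sub_zero, zero_add] at hR_lt
    have hF'_pos : 0 < deriv F 0 :=
      hF'0 fun hlin => hR_lt.ne (deriv_mul_eq_one_of_forall_eq_div hc.ne hlin 0)
    linarith [mul_le_mul_of_nonpos_right hF_tan hR'0.le, mul_lt_mul_of_pos_left hR_lt hF'_pos]

/-- If in addition `R'(0) < 0`, then the asymptotic long-term yield is strictly
smaller than the inversion threshold: `−F(c) < −F'(0)/R'(0)`. -/
theorem asymp_lt_inv
(c : ℝ) (hc : c < 0)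
    (F R : ℝ → ℝ) (ε : ℝ) (hε : 0 < ε)
    (hFconv : ConvexOn ℝ (Set.Ioo (c - ε) ε) F)
    (hRconv : ConvexOn ℝ (Set.Ioo (c - ε) ε) R)
    (hFC1 : ContDiffOn ℝ 1 F (Set.Ioo (c - ε) ε))
    (hRC1 : ContDiffOn ℝ 1 R (Set.Ioo (c - ε) ε))
    (hF0 : F 0 = 0) (hR0 : R 0 = 0) (hRc : R c = 1)
    (hRlt1 : ∀ u ∈ Set.Ioc c 0, R u < 1)
    (hR'c : deriv R c < 0)
    (hFne : ∃ u ∈ Set.Icc c 0, F u ≠ 0)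
    (hstrict : StrictConvexOn ℝ (Set.Icc c 0) F ∨ StrictConvexOn ℝ (Set.Icc c 0) R)
    (hF'0 : (¬ ∀ u, R u = u / c) → 0 < deriv F 0)
    (hR'0 : deriv R 0 < 0) :
    -F c < -(deriv F 0) / deriv R 0 :=
  asymp_lt_inv_general c hc F R ε hε hFconv hRconv hFC1 hRC1 hF0 hR0 hRc hstrict hF'0 hR'0
end

section
/- Define L₁(x) = A(x) − x·F(B(x)) for x ≥ 0. Then for every x ≥ 0 one has L₁(x) = −∫_{B(x)}^0 (F(u) − F(B(x)))/(R(u) − 1) du, and lim_{x→∞} L₁(x) = −∫_c^0 (F(u) − F(c))/(R(u) − 1) du. -/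
/-!
Along the autonomous ODE `B' = R(B) - 1` the substitution `u = B(s)` turns `ds` into
`du / (R(u) - 1)`, so `A(x) - x F(B(x)) = ∫₀ˣ (F(B(s)) - F(B(x))) ds` becomes the stated
integral.
For the limit, convexity of `R` with `R(c) = 1` bounds `1 - R(u)` below by a multiple of `u - c`,
while convexity of `F` makes it Lipschitz on `[c, 0]`, so `|F(u) - F(b)| ≤ K (u - c)` for
`c < b ≤ u`. The integrands are therefore uniformly bounded and dominated convergence applies
as `B(x) ↓ c`.
-/

open Filter Set MeasureTheory intervalIntegral Topology NNReal

section Substitution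

variable {B v f : ℝ → ℝ} {s : Set ℝ} {a b : ℝ}

theorem integral_comp_eq_integral_div_of_hasDerivAt
    (hB : ∀ t ∈ uIcc a b, HasDerivAt B (v (B t)) t) (hBs : MapsTo B (uIcc a b) s)
    (hv : ContinuousOn v s) (hv0 : ∀ u ∈ s, v u ≠ 0) (hf : ContinuousOn f s) :
    ∫ t in a..b, f (B t) = ∫ u in B a..B b, f u / v u := by
  have hBcont : ContinuousOn B (uIcc a b) := fun t ht => (hB t ht).continuousAt.continuousWithinAt
  rw [← integral_comp_mul_deriv' (g := fun u => f u / v u) hB (hv.comp hBcont hBs)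
    ((hf.div hv hv0).mono hBs.image_subset)]
  refine integral_congr fun t ht => ?_
  simp only [Function.comp_apply]
  rw [div_mul_cancel₀ _ (hv0 _ (hBs ht))]

theorem integral_comp_sub_mul_eq_integral_div_of_hasDerivAt
    (hB : ∀ t ∈ uIcc a b, HasDerivAt B (v (B t)) t) (hBs : MapsTo B (uIcc a b) s)
    (hv : ContinuousOn v s) (hv0 : ∀ u ∈ s, v u ≠ 0) (hf : ContinuousOn f s) :
    (∫ t in a..b, f (B t)) - (b - a) * f (B b) = ∫ u in B a..B b, (f u - f (B b)) / v u := by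
  have hBcont : ContinuousOn B (uIcc a b) := fun t ht => (hB t ht).continuousAt.continuousWithinAt
  have hfB : IntervalIntegrable (fun t => f (B t)) volume a b :=
    (hf.comp hBcont hBs).intervalIntegrable
  rw [← integral_comp_eq_integral_div_of_hasDerivAt (f := fun u => f u - f (B b)) hB hBs hv hv0
      (hf.sub continuousOn_const),
    integral_sub hfB intervalIntegrable_const, intervalIntegral.integral_const, smul_eq_mul]

end Substitution

section Limit

variable {F R : ℝ → ℝ} {c d : ℝ} {K : ℝ≥0}

theorem ConvexOn.sub_mul_one_sub_le (hR : ConvexOn ℝ (Icc c d) R) (hRc : R c = 1) {u : ℝ}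
    (hu : u ∈ Ioc c d) : (u - c) * (1 - R d) ≤ (d - c) * (1 - R u) := by
  rcases hu.2.lt_or_eq with hud | rfl
  · have := hR.secant_mono_aux1 (left_mem_Icc.2 (hu.1.trans hud).le)
      (right_mem_Icc.2 (hu.1.trans hud).le) hu.1 hud
    rw [hRc] at this
    linarith
  · exact le_rfl

theorem ConvexOn.lt_one_of_mem_Ioc (hR : ConvexOn ℝ (Icc c d) R) (hRc : R c = 1)
    (hRd : R d < 1) {u : ℝ} (hu : u ∈ Ioc c d) : R u < 1 := by
  have hpos : 0 < (d - c) * (1 - R u) :=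
    (mul_pos (sub_pos.2 hu.1) (sub_pos.2 hRd)).trans_le (hR.sub_mul_one_sub_le hRc hu)
  linarith [pos_of_mul_pos_right hpos (sub_nonneg.2 (hu.1.trans_le hu.2).le)]

theorem abs_sub_div_sub_one_le (hF : LipschitzOnWith K F (Icc c d))
    (hR : ConvexOn ℝ (Icc c d) R) (hRc : R c = 1) (hRd : R d < 1) {t u : ℝ} (ht : c ≤ t)
    (htu : t ≤ u) (hu : u ∈ Ioc c d) :
    |(F u - F t) / (R u - 1)| ≤ K * (d - c) / (1 - R d) := by
  have hRu := hR.lt_one_of_mem_Ioc hRc hRd hu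
  have hLip : |F u - F t| ≤ K * (u - c) := by
    have := hF.dist_le_mul u ⟨hu.1.le, hu.2⟩ t ⟨ht, htu.trans hu.2⟩
    rw [Real.dist_eq, Real.dist_eq, abs_of_nonneg (sub_nonneg.2 htu)] at this
    exact this.trans (by gcongr)
  rw [abs_div, abs_of_neg (sub_neg.2 hRu), neg_sub,
    div_le_div_iff₀ (sub_pos.2 hRu) (sub_pos.2 hRd)]
  calc |F u - F t| * (1 - R d) ≤ K * ((u - c) * (1 - R d)) := by
        rw [← mul_assoc]; exact mul_le_mul_of_nonneg_right hLip (sub_pos.2 hRd).le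
    _ ≤ K * ((d - c) * (1 - R u)) :=
        mul_le_mul_of_nonneg_left (hR.sub_mul_one_sub_le hRc hu) K.2
    _ = K * (d - c) * (1 - R u) := by ring

theorem setIntegral_Ioc_indicator_Ioc {g : ℝ → ℝ} {t : ℝ} (ht : t ∈ Icc c d) :
    ∫ u in Ioc c d, (Ioc t d).indicator g u = ∫ u in t..d, g u := by
  rw [MeasureTheory.integral_indicator measurableSet_Ioc,
    Measure.restrict_restrict measurableSet_Ioc,
    inter_eq_self_of_subset_left (Ioc_subset_Ioc_left ht.1), integral_of_le ht.2]

theorem tendsto_integral_sub_div_sub_one_nhdsGT (hcd : c < d)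
    (hF : LipschitzOnWith K F (Icc c d)) (hRcont : ContinuousOn R (Icc c d))
    (hR : ConvexOn ℝ (Icc c d) R) (hRc : R c = 1) (hRd : R d < 1) :
    Tendsto (fun t => ∫ u in t..d, (F u - F t) / (R u - 1)) (𝓝[>] c)
      (𝓝 (∫ u in c..d, (F u - F c) / (R u - 1))) := by
  set g : ℝ → ℝ → ℝ := fun t u => (F u - F t) / (R u - 1)
  have hg : ∀ t, ContinuousOn (g t) (Ioc c d) := fun t =>
    ((hF.continuousOn.mono Ioc_subset_Icc_self).sub continuousOn_const).div
      ((hRcont.mono Ioc_subset_Icc_self).sub continuousOn_const)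
      fun u hu => (sub_neg.2 (hR.lt_one_of_mem_Ioc hRc hRd hu)).ne
  have hFc : Tendsto F (𝓝[>] c) (𝓝 (F c)) :=
    ((hF.continuousOn c (left_mem_Icc.2 hcd.le)).mono_of_mem_nhdsWithin
      (Icc_mem_nhdsGT hcd))
  set M := K * (d - c) / (1 - R d)
  have hM : 0 ≤ M := div_nonneg (mul_nonneg K.2 (sub_pos.2 hcd).le) (sub_pos.2 hRd).le
  have hbound : ∀ᶠ t in 𝓝[>] c,
      ∀ᵐ u ∂volume.restrict (Ioc c d), ‖(Ioc t d).indicator (g t) u‖ ≤ M := by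
    filter_upwards [Ioo_mem_nhdsGT hcd] with t ht
    refine ae_restrict_of_forall_mem measurableSet_Ioc fun u _ => ?_
    rw [norm_indicator_eq_indicator_norm]
    refine indicator_le' (fun u hu => ?_) (fun _ _ => hM) u
    exact abs_sub_div_sub_one_le hF hR hRc hRd ht.1.le hu.1.le ⟨ht.1.trans hu.1, hu.2⟩
  have hpointwise : ∀ᵐ u ∂volume.restrict (Ioc c d),
      Tendsto (fun t => (Ioc t d).indicator (g t) u) (𝓝[>] c) (𝓝 (g c u)) := by
    refine ae_restrict_of_forall_mem measurableSet_Ioc fun u hu => ?_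
    refine ((tendsto_const_nhds.sub hFc).div_const _).congr' ?_
    filter_upwards [Ioo_mem_nhdsGT hu.1] with t ht
    rw [indicator_of_mem (show u ∈ Ioc t d from ⟨ht.2, hu.2⟩)]
  have hlim := tendsto_integral_filter_of_dominated_convergence (fun _ => M)
    (Eventually.of_forall fun t =>
      ((hg t).aestronglyMeasurable measurableSet_Ioc).indicator measurableSet_Ioc)
    hbound (integrableOn_const (by simp)) hpointwise
  rw [integral_of_le hcd.le]
  refine hlim.congr' ?_
  filter_upwards [Ioo_mem_nhdsGT hcd] with t ht
  exact setIntegral_Ioc_indicator_Ioc (Ioo_subset_Icc_self ht)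

end Limit

theorem L1_formula_and_limit_general
(c : ℝ) (hc : c < 0)
    (F R : ℝ → ℝ) (ε : ℝ) (hε : 0 < ε)
    (hFconv : ConvexOn ℝ (Set.Ioo (c - ε) ε) F)
    (hRconv : ConvexOn ℝ (Set.Ioo (c - ε) ε) R)
    (hRc : R c = 1)
    (hRlt1 : ∀ u ∈ Set.Ioc c 0, R u < 1)
    (B : ℝ → ℝ) (hB0 : B 0 = 0)
    (hBode : ∀ x ≥ (0:ℝ), HasDerivAt B (R (B x) - 1) x)
    (hBrange : ∀ x ≥ (0:ℝ), B x ∈ Set.Ioc c 0)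
    (hBlim : Tendsto B atTop (nhds c))
    (A : ℝ → ℝ) (hA : ∀ x, A x = ∫ s in (0:ℝ)..x, F (B s))
    (L₁ : ℝ → ℝ) (hL₁ : ∀ x ≥ (0:ℝ), L₁ x = A x - x * F (B x)) :
    (∀ x ≥ (0:ℝ), L₁ x = -∫ u in (B x)..(0:ℝ), (F u - F (B x)) / (R u - 1)) ∧
    Tendsto L₁ atTop (nhds (-∫ u in c..(0:ℝ), (F u - F c) / (R u - 1))) := by
  have hIcc : Icc c 0 ⊆ Ioo (c - ε) ε := fun u hu =>
    ⟨by linarith [hu.1], by linarith [hu.2]⟩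
  have hRcont : ContinuousOn R (Icc c 0) := (hRconv.continuousOn isOpen_Ioo).mono hIcc
  obtain ⟨K, hK⟩ := ((hFconv.locallyLipschitzOn isOpen_Ioo).mono hIcc)
    |>.exists_lipschitzOnWith_of_compact isCompact_Icc
  have formula :
      ∀ x ≥ (0:ℝ), L₁ x = -∫ u in (B x)..(0:ℝ), (F u - F (B x)) / (R u - 1) := by
    intro x hx
    have hmem : ∀ t ∈ uIcc 0 x, 0 ≤ t := fun t ht => (uIcc_of_le hx ▸ ht).1
    have := integral_comp_sub_mul_eq_integral_div_of_hasDerivAt (v := fun u => R u - 1)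
      (fun t ht => hBode t (hmem t ht)) (fun t ht => hBrange t (hmem t ht))
      ((hRcont.mono Ioc_subset_Icc_self).sub continuousOn_const)
      (fun u hu => (sub_neg.2 (hRlt1 u hu)).ne) (hK.continuousOn.mono Ioc_subset_Icc_self)
    rw [sub_zero] at this
    rw [hL₁ x hx, hA x, this, hB0, integral_symm]
  refine ⟨formula, ?_⟩
  have hBc : Tendsto B atTop (𝓝[>] c) :=
    tendsto_nhdsWithin_iff.2 ⟨hBlim, eventually_atTop.2 ⟨0, fun x hx => (hBrange x hx).1⟩⟩
  refine ((tendsto_integral_sub_div_sub_one_nhdsGT hc hK hRcont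
    (hRconv.subset hIcc (convex_Icc c 0)) hRc (hRlt1 0 ⟨hc, le_rfl⟩)).comp hBc).neg.congr' ?_
  filter_upwards [eventually_ge_atTop 0] with x hx
  exact (formula x hx).symm

/-- With `L₁ x = A x − x·F(B x)`, one has
`L₁ x = −∫_{B x}^0 (F u − F (B x))/(R u − 1) du` for all `x ≥ 0`, and
`lim_{x→∞} L₁ x = −∫_c^0 (F u − F c)/(R u − 1) du`. -/
theorem L1_formula_and_limit
(c : ℝ) (hc : c < 0)
    (F R : ℝ → ℝ) (ε : ℝ) (hε : 0 < ε)
    (hFconv : ConvexOn ℝ (Set.Ioo (c - ε) ε) F)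
    (hRconv : ConvexOn ℝ (Set.Ioo (c - ε) ε) R)
    (hFC1 : ContDiffOn ℝ 1 F (Set.Ioo (c - ε) ε))
    (hRC1 : ContDiffOn ℝ 1 R (Set.Ioo (c - ε) ε))
    (hF0 : F 0 = 0) (hR0 : R 0 = 0) (hRc : R c = 1)
    (hRlt1 : ∀ u ∈ Set.Ioc c 0, R u < 1)
    (hR'c : deriv R c < 0)
    (B : ℝ → ℝ) (hB0 : B 0 = 0)
    (hBode : ∀ x ≥ (0:ℝ), HasDerivAt B (R (B x) - 1) x)
    (hBanti : StrictAntiOn B (Set.Ici 0))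
    (hBrange : ∀ x ≥ (0:ℝ), B x ∈ Set.Ioc c 0)
    (hBlim : Tendsto B atTop (nhds c))
    (A : ℝ → ℝ) (hA : ∀ x, A x = ∫ s in (0:ℝ)..x, F (B s))
    (L₁ : ℝ → ℝ) (hL₁ : ∀ x ≥ (0:ℝ), L₁ x = A x - x * F (B x)) :
    (∀ x ≥ (0:ℝ), L₁ x = -∫ u in (B x)..(0:ℝ), (F u - F (B x)) / (R u - 1)) ∧
    Tendsto L₁ atTop (nhds (-∫ u in c..(0:ℝ), (F u - F c) / (R u - 1))) :=
  L1_formula_and_limit_general c hc F R ε hε hFconv hRconv hRc hRlt1 B hB0 hBode hBrange hBlim A hA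
    L₁ hL₁
end

section
/- Define L₂(x) = B(x) − x·(R(B(x)) − 1) for x ≥ 0. Then lim_{x→∞} L₂(x) = c. -/
/-! Along the solution, `L₂ x = B x - x * B' x`, so it suffices that `x * B' x → 0`.
Since `R` is `C¹` with `R' c < 0`, it decreases near `c`; as `B` decreases to `c`, the derivative
`B' = R ∘ B - 1` is eventually increasing. For a convergent function with increasing derivative,
the mean value theorem on `[x/2, x]` and `[x, 2x]` squeezes `x * B' x` between
`2 (B x - B (x/2))` and `B (2x) - B x`, both of which tend to `0`. -/

open Filter Set Topology

section MonotoneDeriv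

variable {f f' : ℝ → ℝ} {x₀ : ℝ}

lemma mul_le_sub_le_mul_of_monotoneOn_deriv (hf : ∀ x ≥ x₀, HasDerivAt f (f' x) x)
    (hf' : MonotoneOn f' (Ici x₀)) {a b : ℝ} (ha : x₀ ≤ a) (hab : a < b) :
    (b - a) * f' a ≤ f b - f a ∧ f b - f a ≤ (b - a) * f' b := by
  have hcont : ContinuousOn f (Icc a b) := fun x hx =>
    (hf x (ha.trans hx.1)).continuousAt.continuousWithinAt
  obtain ⟨ξ, hξ, hslope⟩ := exists_hasDerivAt_eq_slope f f' hab hcont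
    fun x hx => hf x (ha.trans hx.1.le)
  have hmid : f b - f a = (b - a) * f' ξ := by
    rw [hslope]; field_simp [(sub_pos.2 hab).ne']
  have hξ₀ : x₀ ≤ ξ := ha.trans hξ.1.le
  rw [hmid]
  exact ⟨mul_le_mul_of_nonneg_left (hf' ha hξ₀ hξ.1.le) (sub_pos.2 hab).le,
    mul_le_mul_of_nonneg_left (hf' hξ₀ (hξ₀.trans hξ.2.le) hξ.2.le) (sub_pos.2 hab).le⟩

theorem tendsto_mul_deriv_of_monotoneOn {l : ℝ} (hf : ∀ x ≥ x₀, HasDerivAt f (f' x) x)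
    (hf' : MonotoneOn f' (Ici x₀)) (hl : Tendsto f atTop (𝓝 l)) :
    Tendsto (fun x => x * f' x) atTop (𝓝 0) := by
  have hlower : Tendsto (fun x => 2 * (f x - f (x / 2))) atTop (𝓝 0) := by
    simpa using (hl.sub (hl.comp (tendsto_id.atTop_div_const two_pos))).const_mul 2
  have hupper : Tendsto (fun x => f (2 * x) - f x) atTop (𝓝 0) := by
    simpa using (hl.comp (tendsto_id.const_mul_atTop two_pos)).sub hl
  refine tendsto_of_tendsto_of_tendsto_of_le_of_le' hlower hupper ?_ ?_
  all_goals filter_upwards [eventually_gt_atTop (max (2 * x₀) 0)] with x hx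
  all_goals obtain ⟨h2x₀, hx0⟩ := max_lt_iff.1 hx
  · have := (mul_le_sub_le_mul_of_monotoneOn_deriv hf hf' (a := x / 2) (b := x)
      (by linarith) (by linarith)).2
    linarith
  · have := (mul_le_sub_le_mul_of_monotoneOn_deriv hf hf' (a := x) (b := 2 * x)
      (by linarith) (by linarith)).1
    linarith

end MonotoneDeriv

theorem exists_mem_nhds_strictAntiOn_of_deriv_neg {f : ℝ → ℝ} {s : Set ℝ} {a : ℝ}
    (hs : IsOpen s) (hf : ContDiffOn ℝ 1 f s) (ha : a ∈ s) (hf'a : deriv f a < 0) :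
    ∃ t ∈ 𝓝 a, StrictAntiOn f t := by
  have hneg : ∀ᶠ x in 𝓝 a, x ∈ s ∧ deriv f x < 0 :=
    (hs.eventually_mem ha).and <|
      ((hf.continuousOn_deriv_of_isOpen hs le_rfl).continuousAt (hs.mem_nhds ha)).eventually
        (gt_mem_nhds hf'a)
  obtain ⟨δ, hδ, hball⟩ := Metric.nhds_basis_closedBall.mem_iff.1 hneg
  refine ⟨Metric.closedBall a δ, Metric.closedBall_mem_nhds a hδ, ?_⟩
  refine strictAntiOn_of_deriv_neg (convex_closedBall a δ)
    (hf.continuousOn.mono fun x hx => (hball hx).1) fun x hx => ?_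
  exact (hball (interior_subset hx)).2

theorem L2_limit_general
    (c : ℝ) (hc : c < 0)
    (R : ℝ → ℝ) (ε : ℝ) (hε : 0 < ε)
    (hRC1 : ContDiffOn ℝ 1 R (Set.Ioo (c - ε) ε))
    (hR'c : deriv R c < 0)
    (B : ℝ → ℝ)
    (hBode : ∀ x ≥ (0:ℝ), HasDerivAt B (R (B x) - 1) x)
    (hBanti : StrictAntiOn B (Set.Ici 0))
    (hBlim : Tendsto B atTop (nhds c))
    (L₂ : ℝ → ℝ) (hL₂ : ∀ x ≥ (0:ℝ), L₂ x = B x - x * (R (B x) - 1)) :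
    Tendsto L₂ atTop (nhds c) := by
  obtain ⟨t, ht, hRanti⟩ := exists_mem_nhds_strictAntiOn_of_deriv_neg isOpen_Ioo hRC1
    ⟨by linarith, by linarith⟩ hR'c
  obtain ⟨x₀, hx₀⟩ := eventually_atTop.1 ((hBlim.eventually ht).and (eventually_ge_atTop 0))
  have hB'mono : MonotoneOn (fun x => R (B x) - 1) (Ici x₀) := fun x hx y hy hxy =>
    sub_le_sub_right (hRanti.antitoneOn (hx₀ y hy).1 (hx₀ x hx).1
      (hBanti.antitoneOn (hx₀ x hx).2 (hx₀ y hy).2 hxy)) 1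
  have hxB' : Tendsto (fun x => x * (R (B x) - 1)) atTop (𝓝 0) :=
    tendsto_mul_deriv_of_monotoneOn (fun x hx => hBode x (hx₀ x hx).2) hB'mono hBlim
  have hL₂' : Tendsto (fun x => B x - x * (R (B x) - 1)) atTop (𝓝 c) := by
    simpa using hBlim.sub hxB'
  refine hL₂'.congr' ?_
  filter_upwards [eventually_ge_atTop 0] with x hx
  exact (hL₂ x hx).symm

/-- With `L₂ x = B x − x·(R(B x) − 1)`, one has `lim_{x→∞} L₂ x = c`. -/
theorem L2_limit
    (c : ℝ) (hc : c < 0)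
    (R : ℝ → ℝ) (ε : ℝ) (hε : 0 < ε)
    (hRconv : ConvexOn ℝ (Set.Ioo (c - ε) ε) R)
    (hRC1 : ContDiffOn ℝ 1 R (Set.Ioo (c - ε) ε))
    (hR0 : R 0 = 0) (hRc : R c = 1)
    (hRlt1 : ∀ u ∈ Set.Ioc c 0, R u < 1)
    (hR'c : deriv R c < 0)
    (B : ℝ → ℝ) (hB0 : B 0 = 0)
    (hBode : ∀ x ≥ (0:ℝ), HasDerivAt B (R (B x) - 1) x)
    (hBanti : StrictAntiOn B (Set.Ici 0))
    (hBrange : ∀ x ≥ (0:ℝ), B x ∈ Set.Ioc c 0)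
    (hBlim : Tendsto B atTop (nhds c))
    (L₂ : ℝ → ℝ) (hL₂ : ∀ x ≥ (0:ℝ), L₂ x = B x - x * (R (B x) - 1)) :
    Tendsto L₂ atTop (nhds c) :=
  L2_limit_general c hc R ε hε hRC1 hR'c B hBode hBanti hBlim L₂ hL₂
end

section
/- In the Vasicek model, the yield-curve threshold equals θ − 3σ²/(4λ²): with F(u) = λθu + (σ²/2)u², R(u) = −λu and c = −1/λ (so that R(c) = 1), one has (1/c)·∫_c^0 (F(u) − F(c))/(R(u) − 1) du = θ − 3σ²/(4λ²). -/
/-! For quadratic `F u = a u + b u²` and `R u = -λ u` with `R c = 1`, the difference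
quotient `(F u - F c)/(R u - 1)` is the affine function `c (a + b (u + c))`, because
`R u - 1 = -λ (u - c)` and `-1/λ = c`. Integrating it over `[c, 0]` gives `-c² (a + 3bc/2)`,
so the threshold is `-c (a + 3bc/2) = a/λ - 3b/(2λ²)`. -/

open MeasureTheory

theorem quadratic_sub_div_linear_sub_one {a b lam c u : ℝ} (hc : lam * c = -1) (hu : u ≠ c) :
    (a * u + b * u ^ 2 - (a * c + b * c ^ 2)) / (-lam * u - 1) = c * (a + b * (u + c)) := by
  have hden : -lam * u - 1 = -lam * (u - c) := by linear_combination -hc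
  have hlam : lam ≠ 0 := by rintro rfl; simp at hc
  rw [hden, div_eq_iff (mul_ne_zero (neg_ne_zero.mpr hlam) (sub_ne_zero.mpr hu))]
  linear_combination ((u - c) * (a + b * (u + c))) * hc

theorem integral_quadratic_sub_div_linear_sub_one {a b lam c : ℝ} (hc : lam * c = -1) :
    ∫ u in c..(0 : ℝ), (a * u + b * u ^ 2 - (a * c + b * c ^ 2)) / (-lam * u - 1) =
      -c ^ 2 * (a + 3 / 2 * b * c) := by
  have hae : ∀ᵐ u ∂volume, u ∈ Set.uIoc c 0 →
      (a * u + b * u ^ 2 - (a * c + b * c ^ 2)) / (-lam * u - 1) =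
        c * (a + b * c) + c * b * u := by
    filter_upwards [volume.ae_ne c] with u hu _
    rw [quadratic_sub_div_linear_sub_one hc hu]
    ring
  rw [intervalIntegral.integral_congr_ae hae,
    intervalIntegral.integral_add intervalIntegrable_const
      (intervalIntegral.intervalIntegrable_id.const_mul _),
    intervalIntegral.integral_const, intervalIntegral.integral_const_mul, integral_id,
    smul_eq_mul]
  ring

theorem vasicek_y_norm_general
    (lam th sig : ℝ) (hlam : 0 < lam)
    (F R : ℝ → ℝ)
    (hF : ∀ u, F u = lam * th * u + sig ^ 2 / 2 * u ^ 2)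
    (hR : ∀ u, R u = -lam * u)
    (c : ℝ) (hc : c = -1 / lam) :
    (1 / c) * (∫ u in c..(0:ℝ), (F u - F c) / (R u - 1)) =
      th - 3 * sig ^ 2 / (4 * lam ^ 2) := by
  have hlam0 : lam ≠ 0 := hlam.ne'
  have hRc : lam * c = -1 := by rw [hc]; field_simp
  simp only [hF, hR]
  rw [integral_quadratic_sub_div_linear_sub_one hRc, hc]
  field_simp
  ring

/-- In the Vasicek model, with `F u = λθu + (σ²/2)u²`, `R u = −λu` and
`c = −1/λ` (so that `R c = 1`), the yield-curve threshold is
`(1/c)·∫_c^0 (F u − F c)/(R u − 1) du = θ − 3σ²/(4λ²)`. -/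
theorem vasicek_y_norm
    (lam th sig : ℝ) (hlam : 0 < lam) (hth : 0 < th) (hsig : 0 < sig)
    (F R : ℝ → ℝ)
    (hF : ∀ u, F u = lam * th * u + sig ^ 2 / 2 * u ^ 2)
    (hR : ∀ u, R u = -lam * u)
    (c : ℝ) (hc : c = -1 / lam) :
    (1 / c) * (∫ u in c..(0:ℝ), (F u - F c) / (R u - 1)) =
      th - 3 * sig ^ 2 / (4 * lam ^ 2) :=
  vasicek_y_norm_general lam th sig hlam F R hF hR c hc
end

section
/- In the Cox–Ingersoll–Ross model, the yield-curve threshold equals (2aθ/(γ − a))·log(2γ/(a + γ)): with F(u) = aθu, R(u) = (σ²/2)u² − au, γ = √(2σ² + a²) and c = −2/(a + γ) (so that R(c) = 1), one has (1/c)·∫_c^0 (F(u) − F(c))/(R(u) − 1) du = (2aθ/(γ − a))·log(2γ/(a + γ)). -/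
open Set Real intervalIntegral MeasureTheory
open scoped Interval

/-! Since `R c = 1`, the quadratic `R - 1` factors as `(σ²/2)(u - c)(u - d)` with
`d = 2/(γ - a) > 0`, while `F u - F c = aθ(u - c)`. The factor `u - c` cancels, leaving a
multiple of `(u - d)⁻¹`, whose integral over `[c, 0]` is `log (d / (d - c)) = -log (2γ/(a + γ))`. -/

theorem integral_inv_sub {a b d : ℝ} (hd : d ∉ [[a, b]]) :
    ∫ x in a..b, (x - d)⁻¹ = log ((b - d) / (a - d)) := by
  rw [integral_comp_sub_right (fun x => x⁻¹), integral_inv]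
  contrapose! hd
  rw [mem_uIcc] at hd ⊢
  rcases hd with h | h
  · exact .inl ⟨by linarith [h.1], by linarith [h.2]⟩
  · exact .inr ⟨by linarith [h.1], by linarith [h.2]⟩

theorem integral_sub_div_of_affine_of_factor {k m κ b c d : ℝ} {F R : ℝ → ℝ}
    (hF : ∀ u, F u = k * u + m) (hR : ∀ u, R u - 1 = κ * ((u - c) * (u - d)))
    (hd : d ∉ [[c, b]]) :
    ∫ u in c..b, (F u - F c) / (R u - 1) = k / κ * log ((b - d) / (c - d)) := by
  have h_ae : ∀ᵐ u : ℝ, u ≠ c := by simp [ae_iff]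
  have h_congr : ∫ u in c..b, (F u - F c) / (R u - 1) = ∫ u in c..b, k / κ * (u - d)⁻¹ := by
    refine integral_congr_ae ?_
    filter_upwards [h_ae] with u huc _
    rw [hF, hF, hR, add_sub_add_right_eq_sub, ← mul_sub, mul_left_comm, mul_comm k,
      mul_div_mul_left _ _ (sub_ne_zero.2 huc), ← div_div, div_eq_mul_inv]
  rw [h_congr, intervalIntegral.integral_const_mul, integral_inv_sub hd]

theorem abs_lt_sqrt_two_mul_sq_add_sq {a s : ℝ} (hs : s ≠ 0) : |a| < √(2 * s ^ 2 + a ^ 2) := by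
  rw [← sqrt_sq_eq_abs]
  exact sqrt_lt_sqrt (sq_nonneg a) (lt_add_of_pos_left _ (by positivity))

theorem cir_riccati_sub_one_factor {a s γ : ℝ} (hγ : γ ^ 2 = 2 * s ^ 2 + a ^ 2) (h₁ : a + γ ≠ 0)
    (h₂ : γ - a ≠ 0) (u : ℝ) :
    s ^ 2 / 2 * u ^ 2 - a * u - 1 = s ^ 2 / 2 * ((u - -2 / (a + γ)) * (u - 2 / (γ - a))) := by
  field_simp
  linear_combination (-2 * u * a - 2) * hγ

theorem cir_root_ratio_eq_inv {a γ : ℝ} (h₁ : 0 < a + γ) (h₂ : 0 < γ - a) :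
    (0 - 2 / (γ - a)) / (-2 / (a + γ) - 2 / (γ - a)) = (2 * γ / (a + γ))⁻¹ := by
  field_simp
  ring

theorem cir_y_norm_general
    (a th sig : ℝ) (hsig : 0 < sig)
    (γ : ℝ) (hγ : γ = Real.sqrt (2 * sig ^ 2 + a ^ 2))
    (F R : ℝ → ℝ)
    (hF : ∀ u, F u = a * th * u)
    (hR : ∀ u, R u = sig ^ 2 / 2 * u ^ 2 - a * u)
    (c : ℝ) (hc : c = -2 / (a + γ)) :
    (1 / c) * (∫ u in c..(0:ℝ), (F u - F c) / (R u - 1)) =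
      2 * a * th / (γ - a) * Real.log (2 * γ / (a + γ)) := by
  have hγ_sq : γ ^ 2 = 2 * sig ^ 2 + a ^ 2 := hγ ▸ sq_sqrt (by positivity)
  have ha_lt : |a| < γ := hγ ▸ abs_lt_sqrt_two_mul_sq_add_sq hsig.ne'
  have h₁ : 0 < a + γ := by linarith [neg_abs_le a]
  have h₂ : 0 < γ - a := by linarith [le_abs_self a]
  have hd : 2 / (γ - a) ∉ [[c, 0]] := fun h => by
    have : c < 0 := hc ▸ div_neg_of_neg_of_pos (by norm_num) h₁
    linarith [(uIcc_of_le this.le ▸ h).2, div_pos two_pos h₂]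
  rw [integral_sub_div_of_affine_of_factor (k := a * th) (m := 0) (fun u => by rw [hF, add_zero])
    (fun u => by rw [hR, hc, cir_riccati_sub_one_factor hγ_sq h₁.ne' h₂.ne']) hd, hc,
    cir_root_ratio_eq_inv h₁ h₂, log_inv]
  have hsig_sq : sig ^ 2 = (γ - a) * (a + γ) / 2 := by linear_combination -hγ_sq / 2
  rw [hsig_sq]
  field_simp

/-- In the Cox–Ingersoll–Ross model, with `F u = aθu`,
`R u = (σ²/2)u² − au`, `γ = √(2σ² + a²)` and `c = −2/(a + γ)` (so that `R c = 1`),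
the yield-curve threshold is
`(1/c)·∫_c^0 (F u − F c)/(R u − 1) du = (2aθ/(γ − a))·log(2γ/(a + γ))`. -/
theorem cir_y_norm
    (a th sig : ℝ) (ha : 0 < a) (hth : 0 < th) (hsig : 0 < sig)
    (γ : ℝ) (hγ : γ = Real.sqrt (2 * sig ^ 2 + a ^ 2))
    (F R : ℝ → ℝ)
    (hF : ∀ u, F u = a * th * u)
    (hR : ∀ u, R u = sig ^ 2 / 2 * u ^ 2 - a * u)
    (c : ℝ) (hc : c = -2 / (a + γ)) :
    (1 / c) * (∫ u in c..(0:ℝ), (F u - F c) / (R u - 1)) =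
      2 * a * th / (γ - a) * Real.log (2 * γ / (a + γ)) :=
  cir_y_norm_general a th sig hsig γ hγ F R hF hR c hc
end

section
/- In the gamma model, the yield-curve threshold equals (kλ/(1 + θ/λ))·log(1 + θ/λ): with F(u) = λθku/(1 − θu), R(u) = −λu and c = −1/λ (so that R(c) = 1), one has (1/c)·∫_c^0 (F(u) − F(c))/(R(u) − 1) du = (kλ/(1 + θ/λ))·log(1 + θ/λ). -/
/-!
Since `λ c = -1`, the denominator `R u - 1 = -λ (u - c)` cancels against the factor `u - c` of
`F u - F c`, so off the endpoint `u = c` the integrand is the constant `-θk/(1 - θc)` times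
`(1 - θu)⁻¹`, whose integral over `[c, 0]` is `θ⁻¹ log (1 - θc)`, with `1 - θc = 1 + θ/λ`.
-/

open Set

theorem integral_inv_one_sub_mul {θ a b : ℝ} (hθ : θ ≠ 0) (ha : 0 < 1 - θ * a)
    (hb : 0 < 1 - θ * b) :
    ∫ u in a..b, (1 - θ * u)⁻¹ = θ⁻¹ * Real.log ((1 - θ * a) / (1 - θ * b)) := by
  rw [intervalIntegral.integral_comp_sub_mul (fun x => x⁻¹) hθ, integral_inv_of_pos hb ha,
    smul_eq_mul]

theorem div_one_sub_mul_sub_div_one_sub_mul {θ u c : ℝ} (hu : 1 - θ * u ≠ 0)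
    (hc : 1 - θ * c ≠ 0) :
    u / (1 - θ * u) - c / (1 - θ * c) = (u - c) / ((1 - θ * u) * (1 - θ * c)) := by
  rw [div_sub_div _ _ hu hc]
  ring

theorem gamma_integrand_eq {lam th k c u : ℝ} (hc : lam * c = -1) (hu : u ≠ c)
    (hdu : 1 - th * u ≠ 0) (hdc : 1 - th * c ≠ 0) :
    (lam * th * k * u / (1 - th * u) - lam * th * k * c / (1 - th * c)) / (-lam * u - 1) =
      -(th * k / (1 - th * c)) * (1 - th * u)⁻¹ := by
  have hlam : lam ≠ 0 := left_ne_zero_of_mul (by rw [hc]; norm_num)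
  have hR : -lam * u - 1 = -lam * (u - c) := by linear_combination -hc
  rw [mul_div_assoc, mul_div_assoc, ← mul_sub, div_one_sub_mul_sub_div_one_sub_mul hdu hdc, hR]
  field_simp [sub_ne_zero.mpr hu]

theorem gamma_model_y_norm_general
    (lam th k : ℝ) (hlam : 0 < lam) (hth : 0 < th)
    (F R : ℝ → ℝ)
    (hF : ∀ u, F u = lam * th * k * u / (1 - th * u))
    (hR : ∀ u, R u = -lam * u)
    (c : ℝ) (hc : c = -1 / lam) :
    (1 / c) * (∫ u in c..(0:ℝ), (F u - F c) / (R u - 1)) =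
      k * lam / (1 + th / lam) * Real.log (1 + th / lam) := by
  have hlc : lam * c = -1 := by rw [hc]; field_simp
  have hc_neg : c < 0 := by rw [hc]; exact div_neg_of_neg_of_pos (by norm_num) hlam
  have hdc : 1 - th * c = 1 + th / lam := by rw [hc]; ring
  have hden : ∀ u ≤ 0, 0 < 1 - th * u := fun u hu => by nlinarith
  have hintegrand : ∀ u ∈ uIoc c 0,
      (F u - F c) / (R u - 1) = -(th * k / (1 - th * c)) * (1 - th * u)⁻¹ := by
    rintro u ⟨hcu, hu0⟩
    rw [min_eq_left hc_neg.le] at hcu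
    rw [max_eq_right hc_neg.le] at hu0
    rw [hF, hF, hR]
    exact gamma_integrand_eq hlc hcu.ne' (hden u hu0).ne' (hden c hc_neg.le).ne'
  rw [intervalIntegral.integral_congr_ae (Filter.Eventually.of_forall hintegrand),
    intervalIntegral.integral_const_mul,
    integral_inv_one_sub_mul hth.ne' (hden c hc_neg.le) (hden 0 le_rfl), mul_zero,
    sub_zero, div_one, hdc, hc]
  field_simp

/-- In the gamma model, with `F u = λθku/(1 − θu)`, `R u = −λu` and
`c = −1/λ` (so that `R c = 1`), the yield-curve threshold is
`(1/c)·∫_c^0 (F u − F c)/(R u − 1) du = (kλ/(1 + θ/λ))·log(1 + θ/λ)`. -/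
theorem gamma_model_y_norm
    (lam th k : ℝ) (hlam : 0 < lam) (hth : 0 < th) (hk : 0 < k)
    (F R : ℝ → ℝ)
    (hF : ∀ u, F u = lam * th * k * u / (1 - th * u))
    (hR : ∀ u, R u = -lam * u)
    (c : ℝ) (hc : c = -1 / lam) :
    (1 / c) * (∫ u in c..(0:ℝ), (F u - F c) / (R u - 1)) =
      k * lam / (1 + th / lam) * Real.log (1 + th / lam) :=
  gamma_model_y_norm_general lam th k hlam hth F R hF hR c hc
end
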